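/- arXiv:2002.04014 — 3 statements merged into one kernel-verified Lean document; each statement's English description precedes it below -/
import Mathlib

section
/- (Theorem: Monte Carlo representation of the gradient of the marginal state–action density ratio.) For every 0 ≤ j ≤ H and every (s,a) ∈ S×A, the θ-gradient of the marginal density ratio admits the representation ∇_θ μ_j(s,a) = E_{p_{π^b}}[ ν_{0:j} ∑_{ℓ=0}^j g_ℓ | s_j = s, a_j = a ]. -/
open Finset

noncomputable section

namespace OPPG

/-- The parameter space `ℝ^D`. -/
abbrev Param (D : ℕ) : Type := EuclideanSpace ℝ (Fin D)

/-- A trajectory `(s₀, a₀, r₀, …, s_H, a_H, r_H, s_{H+1})`. -/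
abbrev Traj (S A R : Type) (H : ℕ) : Type :=
  (Fin (H + 2) → S) × (Fin (H + 1) → A) × (Fin (H + 1) → R)

variable {S A R : Type} [Fintype S] [Fintype A] [Fintype R]
  [DecidableEq S] [DecidableEq A] [DecidableEq R] {H D : ℕ}

/-- Expectation of a (vector-valued) trajectory function under the density `p`. -/
def expec {E : Type*} [AddCommMonoid E] [Module ℝ E]
    (p : Traj S A R H → ℝ) (f : Traj S A R H → E) : E :=
  ∑ T, p T • f T

open Classical in
/-- Probability of the event `ev` under the density `p`. -/
def pr (p : Traj S A R H → ℝ) (ev : Traj S A R H → Prop) : ℝ :=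
  ∑ T, if ev T then p T else 0

open Classical in
/-- Conditional expectation of `f` given the event `ev`, under the density `p`. -/
def cexp {E : Type*} [AddCommMonoid E] [Module ℝ E]
    (p : Traj S A R H → ℝ) (ev : Traj S A R H → Prop) (f : Traj S A R H → E) : E :=
  (∑ T, if ev T then p T else 0)⁻¹ • ∑ T, if ev T then p T • f T else 0

/-- Conditional covariance matrix of the `ℝ^D`-valued `Y` given the event `ev`. -/
def ccov (p : Traj S A R H → ℝ) (ev : Traj S A R H → Prop)
    (Y : Traj S A R H → Param D) : Matrix (Fin D) (Fin D) ℝ :=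
  Matrix.of fun i j =>
    cexp p ev (fun T => Y T i * Y T j) -
      cexp p ev (fun T => Y T i) * cexp p ev (fun T => Y T j)

/-- Covariance matrix of the `ℝ^D`-valued trajectory function `Y` under `p`. -/
def covMatrix (p : Traj S A R H → ℝ) (Y : Traj S A R H → Param D) :
    Matrix (Fin D) (Fin D) ℝ :=
  Matrix.of fun i j =>
    expec p (fun T => Y T i * Y T j) -
      expec p (fun T => Y T i) * expec p (fun T => Y T j)

/-- Operator norm of a `D × D` real matrix (as an operator on Euclidean space). -/
def opNorm (M : Matrix (Fin D) (Fin D) ℝ) : ℝ :=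
  ‖Matrix.toEuclideanCLM (𝕜 := ℝ) M‖

/-- `∑_{k = j}^{H} r_k`. -/
def cumRew (rval : R → ℝ) (j : ℕ) (T : Traj S A R H) : ℝ :=
  ∑ k : Fin (H + 1), if j ≤ (k : ℕ) then rval (T.2.2 k) else 0

open Classical in
/-- The joint probability `p(s_j = s, a_j = a)` under the trajectory density `p`. -/
def jointProb (p : Traj S A R H → ℝ) (j : Fin (H + 1)) (s : S) (a : A) : ℝ :=
  ∑ T, if T.1 j.castSucc = s ∧ T.2.1 j = a then p T else 0

/-- A finite-horizon MDP model: initial distribution, transitions, rewards,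
reward values, behavior policy and the parametric family of target policies. -/
structure Model (S A R : Type) (H D : ℕ) where
  p0 : S → ℝ
  ptr : Fin (H + 1) → S → A → S → ℝ
  prew : Fin (H + 1) → S → A → R → ℝ
  rval : R → ℝ
  pib : Fin (H + 1) → S → A → ℝ
  pit : Param D → Fin (H + 1) → S → A → ℝ

namespace Model

variable (M : Model S A R H D)

/-- Trajectory density induced by a policy `pi`. -/
def traj (pi : Fin (H + 1) → S → A → ℝ) (T : Traj S A R H) : ℝ :=
  M.p0 (T.1 0) * ∏ t : Fin (H + 1),
    (pi t (T.1 t.castSucc) (T.2.1 t) * M.prew t (T.1 t.castSucc) (T.2.1 t) (T.2.2 t) *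
      M.ptr t (T.1 t.castSucc) (T.2.1 t) (T.1 t.succ))

/-- Trajectory density under the behavior policy. -/
def pb : Traj S A R H → ℝ := M.traj M.pib

/-- Trajectory density under the target policy `π^{θ'}`. -/
def pe (θ' : Param D) : Traj S A R H → ℝ := M.traj (M.pit θ')

/-- The `q`-function `q_j(s,a) = E_{π^{θ'}}[∑_{k≥j} r_k ∣ s_j = s, a_j = a]`. -/
def qfun (θ' : Param D) (j : Fin (H + 1)) (s : S) (a : A) : ℝ :=
  cexp (M.pe θ') (fun T => T.1 j.castSucc = s ∧ T.2.1 j = a) (cumRew M.rval (j : ℕ))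

/-- The `v`-function `v_j(s)`, with the convention `v_{H+1} ≡ 0`. -/
def vfun (θ' : Param D) (j : Fin (H + 2)) (s : S) : ℝ :=
  if (j : ℕ) ≤ H then cexp (M.pe θ') (fun T => T.1 j = s) (cumRew M.rval (j : ℕ)) else 0

/-- The marginal state–action density ratio `μ_j(s,a)`. -/
def mufun (θ' : Param D) (j : Fin (H + 1)) (s : S) (a : A) : ℝ :=
  jointProb (M.pe θ') j s a / jointProb M.pb j s a

/-- The policy score `g_t = ∇_θ log π^θ_t(a ∣ s)`. -/
def score (θ : Param D) (t : Fin (H + 1)) (s : S) (a : A) : Param D :=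
  gradient (fun θ' => Real.log (M.pit θ' t s a)) θ

/-- The policy score evaluated along a trajectory. -/
def scoreT (θ : Param D) (t : Fin (H + 1)) (T : Traj S A R H) : Param D :=
  M.score θ t (T.1 t.castSucc) (T.2.1 t)

/-- `d^q_j = ∇_θ q_j`. -/
def dq (θ : Param D) (j : Fin (H + 1)) (s : S) (a : A) : Param D :=
  gradient (fun θ' => M.qfun θ' j s a) θ

/-- `d^v_j = ∇_θ v_j` (so `d^v_{H+1} ≡ 0`). -/
def dv (θ : Param D) (j : Fin (H + 2)) (s : S) : Param D :=
  gradient (fun θ' => M.vfun θ' j s) θ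

/-- `d^μ_j = ∇_θ μ_j`. -/
def dmu (θ : Param D) (j : Fin (H + 1)) (s : S) (a : A) : Param D :=
  gradient (fun θ' => M.mufun θ' j s a) θ

/-- The single-step density ratio `ν̃_t` along a trajectory. -/
def nu (θ' : Param D) (t : Fin (H + 1)) (T : Traj S A R H) : ℝ :=
  M.pit θ' t (T.1 t.castSucc) (T.2.1 t) / M.pib t (T.1 t.castSucc) (T.2.1 t)

/-- The cumulative density ratio `ν_{0:k-1} = ∏_{t < k} ν̃_t` (so `nuUpto 0 = 1`). -/
def nuUpto (θ' : Param D) (k : ℕ) (T : Traj S A R H) : ℝ :=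
  ∏ t : Fin (H + 1), if (t : ℕ) < k then M.nu θ' t T else 1

/-- The cumulative density ratio `ν_{k:l} = ∏_{k ≤ t ≤ l} ν̃_t` (empty product is `1`). -/
def nuSeg (θ' : Param D) (k l : ℕ) (T : Traj S A R H) : ℝ :=
  ∏ t : Fin (H + 1), if k ≤ (t : ℕ) ∧ (t : ℕ) ≤ l then M.nu θ' t T else 1

/-- The policy value `J(θ') = E_{π^{θ'}}[∑_t r_t]`. -/
def Jval (θ' : Param D) : ℝ :=
  expec (M.pe θ') (fun T => ∑ t : Fin (H + 1), M.rval (T.2.2 t))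

/-- The policy gradient `Z(θ) = ∇_θ J(θ)`. -/
def Zval (θ : Param D) : Param D := gradient M.Jval θ

/-- `μ_{j-1}(s_{j-1}, a_{j-1})` along a trajectory, with the convention `μ_{-1} ≡ 1`. -/
def muPrev (θ : Param D) (j : Fin (H + 1)) (T : Traj S A R H) : ℝ :=
  if (j : ℕ) = 0 then 1 else
    let j' : Fin (H + 1) := ⟨(j : ℕ) - 1, by omega⟩
    M.mufun θ j' (T.1 j'.castSucc) (T.2.1 j')

/-- `d^μ_{j-1}(s_{j-1}, a_{j-1})` along a trajectory, with the convention `d^μ_{-1} ≡ 0`. -/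
def dmuPrev (θ : Param D) (j : Fin (H + 1)) (T : Traj S A R H) : Param D :=
  if (j : ℕ) = 0 then 0 else
    let j' : Fin (H + 1) := ⟨(j : ℕ) - 1, by omega⟩
    M.dmu θ j' (T.1 j'.castSucc) (T.2.1 j')

/-- The efficient influence function `ξ_MDP` (with mean `Z(θ)`). -/
def xiMDP (θ : Param D) (T : Traj S A R H) : Param D :=
  ∑ j : Fin (H + 1),
    ((M.rval (T.2.2 j) - M.qfun θ j (T.1 j.castSucc) (T.2.1 j)) •
        M.dmu θ j (T.1 j.castSucc) (T.2.1 j)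
      - M.mufun θ j (T.1 j.castSucc) (T.2.1 j) • M.dq θ j (T.1 j.castSucc) (T.2.1 j)
      + M.muPrev θ j T • M.dv θ j.castSucc (T.1 j.castSucc)
      + M.vfun θ j.castSucc (T.1 j.castSucc) • M.dmuPrev θ j T)

/-- The step-wise importance sampling integrand `∑_t ν_{0:t} r_t ∑_{s ≤ t} g_s`. -/
def stepIS (θ : Param D) (T : Traj S A R H) : Param D :=
  ∑ t : Fin (H + 1), (M.nuUpto θ ((t : ℕ) + 1) T * M.rval (T.2.2 t)) •
    ∑ s : Fin (H + 1), (if (s : ℕ) ≤ (t : ℕ) then M.scoreT θ s T else 0)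

end Model

/-- All the standing assumptions on the model: `p₀`, the transitions, and the reward
distributions are probability distributions; rewards are nonnegative; the behavior policy is
a positive probability distribution over actions; every target policy is a positive
probability distribution over actions; and all state–action marginals of the behavior
trajectory distribution are positive. -/
structure Model.Valid (M : Model S A R H D) : Prop where
  p0_nonneg : ∀ s, 0 ≤ M.p0 s
  p0_sum : ∑ s, M.p0 s = 1
  ptr_nonneg : ∀ t s a s', 0 ≤ M.ptr t s a s'
  ptr_sum : ∀ t s a, ∑ s', M.ptr t s a s' = 1
  prew_nonneg : ∀ t s a r, 0 ≤ M.prew t s a r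
  prew_sum : ∀ t s a, ∑ r, M.prew t s a r = 1
  rval_nonneg : ∀ r, 0 ≤ M.rval r
  pib_pos : ∀ t s a, 0 < M.pib t s a
  pib_sum : ∀ t s, ∑ a, M.pib t s a = 1
  pit_pos : ∀ θ' t s a, 0 < M.pit θ' t s a
  pit_sum : ∀ θ' t s, ∑ a, M.pit θ' t s a = 1
  pb_marg_pos : ∀ (j : Fin (H + 1)) (s : S) (a : A), 0 < jointProb M.pb j s a

end OPPG

namespace OPPG

variable {S A R : Type} [Fintype S] [Fintype A] [Fintype R]
  [DecidableEq S] [DecidableEq A] [DecidableEq R] {H D : ℕ}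


section Marginal

variable {ι X : Type*}

lemma upd_splitAt {ι X : Type*} [DecidableEq ι] (i : ι) (x y : X)
    (g : { j // j ≠ i } → X) :
    Function.update ((Equiv.funSplitAt i X).symm (y, g)) i x
      = (Equiv.funSplitAt i X).symm (x, g) := by
  funext j
  by_cases h : j = i
  · subst h; simp [Equiv.funSplitAt, Equiv.piSplitAt]
  · simp [Function.update_of_ne h, Equiv.funSplitAt, Equiv.piSplitAt, h]

lemma sum_sum_update {ι X : Type*} [Fintype ι] [Fintype X] [DecidableEq ι]
    (i : ι) (C : (ι → X) → ℝ) :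
    ∑ x : X, ∑ f : ι → X, C (Function.update f i x)
      = (Fintype.card X : ℝ) * ∑ f : ι → X, C f := by
  have key : ∀ x : X, ∑ f : ι → X, C (Function.update f i x)
      = (Fintype.card X : ℝ) * ∑ g : { j // j ≠ i } → X,
          C ((Equiv.funSplitAt i X).symm (x, g)) := by
    intro x
    rw [← (Equiv.funSplitAt i X).symm.sum_comp (fun f => C (Function.update f i x))]
    rw [Fintype.sum_prod_type]
    simp only [upd_splitAt]
    rw [Finset.sum_const, Finset.card_univ, nsmul_eq_mul]
  simp only [key]
  rw [← Finset.mul_sum]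
  congr 1
  rw [← (Equiv.funSplitAt i X).symm.sum_comp C, Fintype.sum_prod_type]

lemma sum_mul_marg {ι X : Type*} [Fintype ι] [Fintype X] [DecidableEq ι]
    (i : ι) (A B : (ι → X) → ℝ) (hA : ∀ f x, A (Function.update f i x) = A f) :
    ∑ f : ι → X, A f * ∑ x : X, B (Function.update f i x)
      = (Fintype.card X : ℝ) * ∑ f : ι → X, A f * B f := by
  have : ∀ f : ι → X, A f * ∑ x : X, B (Function.update f i x)
      = ∑ x : X, (fun f => A f * B f) (Function.update f i x) := by
    intro f
    rw [Finset.mul_sum]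
    exact Finset.sum_congr rfl fun x _ => by simp only [hA f x]
  simp only [this]
  rw [Finset.sum_comm]
  exact sum_sum_update i (fun f => A f * B f)

end Marginal

variable {S A R : Type} [Fintype S] [Fintype A] [Fintype R]
  [DecidableEq S] [DecidableEq A] [DecidableEq R] {H D : ℕ}

/-- Update the state at index `i`. -/
def updS (T : Traj S A R H) (i : Fin (H + 2)) (x : S) : Traj S A R H :=
  (Function.update T.1 i x, T.2.1, T.2.2)

/-- Update the action at index `i`. -/
def updA (T : Traj S A R H) (i : Fin (H + 1)) (x : A) : Traj S A R H :=
  (T.1, Function.update T.2.1 i x, T.2.2)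

/-- Update the reward at index `i`. -/
def updR (T : Traj S A R H) (i : Fin (H + 1)) (x : R) : Traj S A R H :=
  (T.1, T.2.1, Function.update T.2.2 i x)

lemma sum_traj_eq (g : Traj S A R H → ℝ) :
    ∑ T : Traj S A R H, g T
      = ∑ p : (Fin (H + 1) → A) × (Fin (H + 1) → R), ∑ sf : Fin (H + 2) → S,
          g (sf, p) := by
  rw [Fintype.sum_prod_type]; exact Finset.sum_comm

lemma sum_traj_eq_a (g : Traj S A R H → ℝ) :
    ∑ T : Traj S A R H, g T
      = ∑ sf : Fin (H + 2) → S, ∑ rf : Fin (H + 1) → R, ∑ af : Fin (H + 1) → A,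
          g (sf, af, rf) := by
  rw [Fintype.sum_prod_type]
  exact Finset.sum_congr rfl fun sf _ => by
    rw [Fintype.sum_prod_type]; exact Finset.sum_comm

lemma sum_traj_eq_r (g : Traj S A R H → ℝ) :
    ∑ T : Traj S A R H, g T
      = ∑ sf : Fin (H + 2) → S, ∑ af : Fin (H + 1) → A, ∑ rf : Fin (H + 1) → R,
          g (sf, af, rf) := by
  rw [Fintype.sum_prod_type]
  exact Finset.sum_congr rfl fun sf _ => by rw [Fintype.sum_prod_type]

lemma margS (i : Fin (H + 2)) (A' B' : Traj S A R H → ℝ)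
    (hA : ∀ T x, A' (updS T i x) = A' T) :
    ∑ T : Traj S A R H, A' T * ∑ x : S, B' (updS T i x)
      = (Fintype.card S : ℝ) * ∑ T : Traj S A R H, A' T * B' T := by
  rw [sum_traj_eq (fun T => A' T * ∑ x : S, B' (updS T i x)),
    sum_traj_eq (fun T => A' T * B' T), Finset.mul_sum]
  refine Finset.sum_congr rfl fun p _ => ?_
  exact sum_mul_marg i (fun sf => A' (sf, p)) (fun sf => B' (sf, p))
    (fun sf x => hA (sf, p) x)

lemma margA (i : Fin (H + 1)) (A' B' : Traj S A R H → ℝ)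
    (hA : ∀ T x, A' (updA T i x) = A' T) :
    ∑ T : Traj S A R H, A' T * ∑ x : A, B' (updA T i x)
      = (Fintype.card A : ℝ) * ∑ T : Traj S A R H, A' T * B' T := by
  rw [sum_traj_eq_a (fun T => A' T * ∑ x : A, B' (updA T i x)),
    sum_traj_eq_a (fun T => A' T * B' T), Finset.mul_sum]
  refine Finset.sum_congr rfl fun sf _ => ?_
  rw [Finset.mul_sum]
  refine Finset.sum_congr rfl fun rf _ => ?_
  exact sum_mul_marg i (fun af => A' (sf, af, rf)) (fun af => B' (sf, af, rf))
    (fun af x => hA (sf, af, rf) x)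

lemma margR (i : Fin (H + 1)) (A' B' : Traj S A R H → ℝ)
    (hA : ∀ T x, A' (updR T i x) = A' T) :
    ∑ T : Traj S A R H, A' T * ∑ x : R, B' (updR T i x)
      = (Fintype.card R : ℝ) * ∑ T : Traj S A R H, A' T * B' T := by
  rw [sum_traj_eq_r (fun T => A' T * ∑ x : R, B' (updR T i x)),
    sum_traj_eq_r (fun T => A' T * B' T), Finset.mul_sum]
  refine Finset.sum_congr rfl fun sf _ => ?_
  rw [Finset.mul_sum]
  refine Finset.sum_congr rfl fun af _ => ?_
  exact sum_mul_marg i (fun rf => A' (sf, af, rf)) (fun rf => B' (sf, af, rf))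
    (fun rf x => hA (sf, af, rf) x)


/-- The one-step factor of the trajectory density. -/
def fac (M : Model S A R H D) (pi : Fin (H + 1) → S → A → ℝ) (t : Fin (H + 1))
    (T : Traj S A R H) : ℝ :=
  pi t (T.1 t.castSucc) (T.2.1 t) * M.prew t (T.1 t.castSucc) (T.2.1 t) (T.2.2 t) *
    M.ptr t (T.1 t.castSucc) (T.2.1 t) (T.1 t.succ)

lemma traj_eq_fac (M : Model S A R H D) (pi : Fin (H + 1) → S → A → ℝ) (T : Traj S A R H) :
    M.traj pi T = M.p0 (T.1 0) * ∏ t : Fin (H + 1), fac M pi t T := rfl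

/-- Partial trajectory sum: only factors at steps `< k` are included. -/
def Epart (M : Model S A R H D) (pi : Fin (H + 1) → S → A → ℝ) (k : ℕ)
    (F : Traj S A R H → ℝ) : ℝ :=
  ∑ T : Traj S A R H,
    (M.p0 (T.1 0) * ∏ t : Fin (H + 1), (if (t : ℕ) < k then fac M pi t T else 1)) * F T

lemma fac_updR (M : Model S A R H D) (pi : Fin (H + 1) → S → A → ℝ) {t i : Fin (H + 1)}
    (h : t ≠ i) (T : Traj S A R H) (x : R) : fac M pi t (updR T i x) = fac M pi t T := by
  simp [fac, updR, Function.update_of_ne h]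

lemma fac_updA (M : Model S A R H D) (pi : Fin (H + 1) → S → A → ℝ) {t i : Fin (H + 1)}
    (h : t ≠ i) (T : Traj S A R H) (x : A) : fac M pi t (updA T i x) = fac M pi t T := by
  simp [fac, updA, Function.update_of_ne h]

lemma fac_updS (M : Model S A R H D) (pi : Fin (H + 1) → S → A → ℝ) {t : Fin (H + 1)}
    {i : Fin (H + 2)} (h1 : t.castSucc ≠ i) (h2 : t.succ ≠ i) (T : Traj S A R H) (x : S) :
    fac M pi t (updS T i x) = fac M pi t T := by
  simp [fac, updS, Function.update_of_ne h1, Function.update_of_ne h2]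

lemma prod_ite_split (M : Model S A R H D) (pi : Fin (H + 1) → S → A → ℝ) (k : ℕ)
    (hk : k ≤ H) (T : Traj S A R H) :
    (∏ t : Fin (H + 1), (if (t : ℕ) < k + 1 then fac M pi t T else 1))
      = (∏ t : Fin (H + 1), (if (t : ℕ) < k then fac M pi t T else 1)) *
          fac M pi ⟨k, by omega⟩ T := by
  have key : ∀ t : Fin (H + 1), (if (t : ℕ) < k + 1 then fac M pi t T else 1)
      = (if (t : ℕ) < k then fac M pi t T else 1) *
          (if t = ⟨k, by omega⟩ then fac M pi t T else 1) := by
    intro t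
    by_cases h1 : (t : ℕ) < k
    · have h2 : t ≠ ⟨k, by omega⟩ := by
        intro he; rw [he] at h1; simp at h1
      rw [if_pos (Nat.lt_succ_of_lt h1), if_pos h1, if_neg h2, mul_one]
    · by_cases h2 : t = ⟨k, by omega⟩
      · rw [h2]; simp
      · have h3 : ¬ (t : ℕ) < k + 1 := by
          have : (t : ℕ) ≠ k := fun he => h2 (Fin.ext he)
          omega
        rw [if_neg h1, if_neg h3, if_neg h2, mul_one]
  rw [Finset.prod_congr rfl fun t _ => key t, Finset.prod_mul_distrib,
    Finset.prod_ite_eq' Finset.univ ⟨k, by omega⟩ (fun t => fac M pi t T)]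
  simp

lemma Epart_step (M : Model S A R H D)
    (hprew : ∀ t s a, ∑ r, M.prew t s a r = 1)
    (hptr : ∀ t s a, ∑ s', M.ptr t s a s' = 1)
    (pi : Fin (H + 1) → S → A → ℝ) (hpi : ∀ t s, ∑ a, pi t s a = 1)
    (j k : ℕ) (F : Traj S A R H → ℝ)
    (hFs : ∀ T (i : Fin (H + 2)) x, j < (i : ℕ) → F (updS T i x) = F T)
    (hFa : ∀ T (i : Fin (H + 1)) x, j < (i : ℕ) → F (updA T i x) = F T)
    (hFr : ∀ T (i : Fin (H + 1)) x, j < (i : ℕ) → F (updR T i x) = F T)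
    (hjk : j < k) (hk : k ≤ H) :
    Epart M pi k F = (Fintype.card A : ℝ) *
      ((Fintype.card S : ℝ) * ((Fintype.card R : ℝ) * Epart M pi (k + 1) F)) := by
  set kf : Fin (H + 1) := ⟨k, by omega⟩ with hkf
  set P : Traj S A R H → ℝ := fun T =>
    M.p0 (T.1 0) * ∏ t : Fin (H + 1), (if (t : ℕ) < k then fac M pi t T else 1) with hP
  have hkcs : (kf.castSucc : ℕ) = k := rfl
  have hksc : (kf.succ : ℕ) = k + 1 := rfl
  have hne : ∀ t : Fin (H + 1), (t : ℕ) < k → t ≠ kf := by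
    intro t h1 he; rw [he] at h1; simp [hkf] at h1
  -- invariance of P under the three updates at step k
  have hPr : ∀ T x, P (updR T kf x) = P T := by
    intro T x
    simp only [hP]
    refine congrArg₂ (· * ·) rfl (Finset.prod_congr rfl fun t _ => ?_)
    by_cases h1 : (t : ℕ) < k
    · rw [if_pos h1, if_pos h1, fac_updR M pi (hne t h1)]
    · rw [if_neg h1, if_neg h1]
  have hPa : ∀ T x, P (updA T kf x) = P T := by
    intro T x
    simp only [hP]
    refine congrArg₂ (· * ·) rfl (Finset.prod_congr rfl fun t _ => ?_)
    by_cases h1 : (t : ℕ) < k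
    · rw [if_pos h1, if_pos h1, fac_updA M pi (hne t h1)]
    · rw [if_neg h1, if_neg h1]
  have hPs : ∀ T x, P (updS T kf.succ x) = P T := by
    intro T x
    simp only [hP]
    have h0 : (0 : Fin (H + 2)) ≠ kf.succ := by
      intro he; have := congrArg Fin.val he; simp [hksc] at this
    refine congrArg₂ (· * ·) ?_ (Finset.prod_congr rfl fun t _ => ?_)
    · show M.p0 (Function.update T.1 kf.succ x 0) = M.p0 (T.1 0)
      rw [Function.update_of_ne h0]
    · by_cases h1 : (t : ℕ) < k
      · have h2 : t.castSucc ≠ kf.succ := by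
          intro he; have := congrArg Fin.val he
          rw [hksc, Fin.coe_castSucc] at this; omega
        have h3 : t.succ ≠ kf.succ := by
          intro he; have := congrArg Fin.val he
          rw [hksc, Fin.val_succ] at this; omega
        rw [if_pos h1, if_pos h1, fac_updS M pi h2 h3]
      · rw [if_neg h1, if_neg h1]
  have hcs : kf.castSucc ≠ kf.succ := by
    intro he; have := congrArg Fin.val he; rw [hkcs, hksc] at this; omega
  -- stage 1: remove the reward factor
  have stage1 : ∑ T : Traj S A R H,
      (P T * (pi kf (T.1 kf.castSucc) (T.2.1 kf) *
        M.ptr kf (T.1 kf.castSucc) (T.2.1 kf) (T.1 kf.succ))) * F T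
      = (Fintype.card R : ℝ) * Epart M pi (k + 1) F := by
    calc ∑ T : Traj S A R H,
        (P T * (pi kf (T.1 kf.castSucc) (T.2.1 kf) *
          M.ptr kf (T.1 kf.castSucc) (T.2.1 kf) (T.1 kf.succ))) * F T
        = ∑ T : Traj S A R H,
            ((P T * (pi kf (T.1 kf.castSucc) (T.2.1 kf) *
              M.ptr kf (T.1 kf.castSucc) (T.2.1 kf) (T.1 kf.succ))) * F T) *
            ∑ x : R, M.prew kf ((updR T kf x).1 kf.castSucc)
              ((updR T kf x).2.1 kf) ((updR T kf x).2.2 kf) := by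
          refine Finset.sum_congr rfl fun T _ => ?_
          have : ∀ x : R, M.prew kf ((updR T kf x).1 kf.castSucc)
              ((updR T kf x).2.1 kf) ((updR T kf x).2.2 kf)
              = M.prew kf (T.1 kf.castSucc) (T.2.1 kf) x := by
            intro x
            show M.prew kf (T.1 kf.castSucc) (T.2.1 kf)
              (Function.update T.2.2 kf x kf) = _
            rw [Function.update_self]
          rw [Finset.sum_congr rfl fun x _ => this x, hprew kf _ _, mul_one]
      _ = (Fintype.card R : ℝ) * ∑ T : Traj S A R H,
            ((P T * (pi kf (T.1 kf.castSucc) (T.2.1 kf) *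
              M.ptr kf (T.1 kf.castSucc) (T.2.1 kf) (T.1 kf.succ))) * F T) *
            M.prew kf (T.1 kf.castSucc) (T.2.1 kf) (T.2.2 kf) := by
          refine margR kf
            (fun T => (P T * (pi kf (T.1 kf.castSucc) (T.2.1 kf) *
              M.ptr kf (T.1 kf.castSucc) (T.2.1 kf) (T.1 kf.succ))) * F T)
            (fun T => M.prew kf (T.1 kf.castSucc) (T.2.1 kf) (T.2.2 kf)) ?_
          intro T x
          rw [hPr T x, hFr T kf x hjk]
          rfl
      _ = (Fintype.card R : ℝ) * Epart M pi (k + 1) F := by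
          congr 1
          refine (Finset.sum_congr rfl fun T _ => ?_).symm
          rw [prod_ite_split M pi k hk T]
          simp only [hP, fac, ← hkf]
          ring
  -- stage 2: remove the transition factor
  have stage2 : ∑ T : Traj S A R H,
      (P T * pi kf (T.1 kf.castSucc) (T.2.1 kf)) * F T
      = (Fintype.card S : ℝ) * ((Fintype.card R : ℝ) * Epart M pi (k + 1) F) := by
    calc ∑ T : Traj S A R H, (P T * pi kf (T.1 kf.castSucc) (T.2.1 kf)) * F T
        = ∑ T : Traj S A R H,
            ((P T * pi kf (T.1 kf.castSucc) (T.2.1 kf)) * F T) *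
            ∑ x : S, M.ptr kf ((updS T kf.succ x).1 kf.castSucc)
              ((updS T kf.succ x).2.1 kf) ((updS T kf.succ x).1 kf.succ) := by
          refine Finset.sum_congr rfl fun T _ => ?_
          have : ∀ x : S, M.ptr kf ((updS T kf.succ x).1 kf.castSucc)
              ((updS T kf.succ x).2.1 kf) ((updS T kf.succ x).1 kf.succ)
              = M.ptr kf (T.1 kf.castSucc) (T.2.1 kf) x := by
            intro x
            show M.ptr kf (Function.update T.1 kf.succ x kf.castSucc) (T.2.1 kf)
              (Function.update T.1 kf.succ x kf.succ) = _
            rw [Function.update_of_ne hcs, Function.update_self]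
          rw [Finset.sum_congr rfl fun x _ => this x, hptr kf _ _, mul_one]
      _ = (Fintype.card S : ℝ) * ∑ T : Traj S A R H,
            ((P T * pi kf (T.1 kf.castSucc) (T.2.1 kf)) * F T) *
            M.ptr kf (T.1 kf.castSucc) (T.2.1 kf) (T.1 kf.succ) := by
          refine margS kf.succ
            (fun T => (P T * pi kf (T.1 kf.castSucc) (T.2.1 kf)) * F T)
            (fun T => M.ptr kf (T.1 kf.castSucc) (T.2.1 kf) (T.1 kf.succ)) ?_
          intro T x
          rw [hPs T x, hFs T kf.succ x (Nat.lt_succ_of_lt hjk)]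
          show P T * pi kf (Function.update T.1 kf.succ x kf.castSucc) (T.2.1 kf) * F T = _
          rw [Function.update_of_ne hcs]
      _ = (Fintype.card S : ℝ) * ((Fintype.card R : ℝ) * Epart M pi (k + 1) F) := by
          rw [← stage1]
          congr 1
          refine Finset.sum_congr rfl fun T _ => ?_
          ring
  -- stage 3: remove the policy factor
  calc Epart M pi k F
      = ∑ T : Traj S A R H, (P T * F T) *
          ∑ x : A, pi kf ((updA T kf x).1 kf.castSucc) ((updA T kf x).2.1 kf) := by
        refine Finset.sum_congr rfl fun T _ => ?_
        have : ∀ x : A, pi kf ((updA T kf x).1 kf.castSucc) ((updA T kf x).2.1 kf)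
            = pi kf (T.1 kf.castSucc) x := by
          intro x
          show pi kf (T.1 kf.castSucc) (Function.update T.2.1 kf x kf) = _
          rw [Function.update_self]
        rw [Finset.sum_congr rfl fun x _ => this x, hpi kf _, mul_one]
    _ = (Fintype.card A : ℝ) * ∑ T : Traj S A R H,
          (P T * F T) * pi kf (T.1 kf.castSucc) (T.2.1 kf) := by
        refine margA kf (fun T => P T * F T)
          (fun T => pi kf (T.1 kf.castSucc) (T.2.1 kf)) ?_
        intro T x
        rw [hPa T x, hFa T kf x hjk]
    _ = (Fintype.card A : ℝ) *
        ((Fintype.card S : ℝ) * ((Fintype.card R : ℝ) * Epart M pi (k + 1) F)) := by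
        rw [← stage2]
        congr 1
        refine Finset.sum_congr rfl fun T _ => ?_
        ring


lemma Epart_chain (M : Model S A R H D)
    (hprew : ∀ t s a, ∑ r, M.prew t s a r = 1)
    (hptr : ∀ t s a, ∑ s', M.ptr t s a s' = 1)
    (pi : Fin (H + 1) → S → A → ℝ) (hpi : ∀ t s, ∑ a, pi t s a = 1)
    (j : ℕ) (F : Traj S A R H → ℝ)
    (hFs : ∀ T (i : Fin (H + 2)) x, j < (i : ℕ) → F (updS T i x) = F T)
    (hFa : ∀ T (i : Fin (H + 1)) x, j < (i : ℕ) → F (updA T i x) = F T)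
    (hFr : ∀ T (i : Fin (H + 1)) x, j < (i : ℕ) → F (updR T i x) = F T) :
    ∀ n k, j < k → k + n = H + 1 →
      Epart M pi k F =
        ((Fintype.card A : ℝ) * ((Fintype.card S : ℝ) * (Fintype.card R : ℝ))) ^ n *
          Epart M pi (H + 1) F := by
  intro n
  induction n with
  | zero => intro k hjk hk; have : k = H + 1 := by omega
            rw [this]; simp
  | succ n ih =>
      intro k hjk hk
      rw [Epart_step M hprew hptr pi hpi j k F hFs hFa hFr hjk (by omega),
        ih (k + 1) (by omega) (by omega)]
      ring

lemma sum_traj_policy_eq (M : Model S A R H D)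
    [Nonempty S] [Nonempty A] [Nonempty R]
    (hprew : ∀ t s a, ∑ r, M.prew t s a r = 1)
    (hptr : ∀ t s a, ∑ s', M.ptr t s a s' = 1)
    (pi1 pi2 : Fin (H + 1) → S → A → ℝ)
    (hpi1 : ∀ t s, ∑ a, pi1 t s a = 1) (hpi2 : ∀ t s, ∑ a, pi2 t s a = 1)
    (j : ℕ) (hjH : j ≤ H)
    (hag : ∀ t : Fin (H + 1), (t : ℕ) ≤ j → pi1 t = pi2 t)
    (F : Traj S A R H → ℝ)
    (hFs : ∀ T (i : Fin (H + 2)) x, j < (i : ℕ) → F (updS T i x) = F T)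
    (hFa : ∀ T (i : Fin (H + 1)) x, j < (i : ℕ) → F (updA T i x) = F T)
    (hFr : ∀ T (i : Fin (H + 1)) x, j < (i : ℕ) → F (updR T i x) = F T) :
    ∑ T : Traj S A R H, M.traj pi1 T * F T = ∑ T : Traj S A R H, M.traj pi2 T * F T := by
  have htraj : ∀ pi : Fin (H + 1) → S → A → ℝ,
      ∑ T : Traj S A R H, M.traj pi T * F T = Epart M pi (H + 1) F := by
    intro pi
    refine Finset.sum_congr rfl fun T _ => ?_
    rw [traj_eq_fac]
    congr 2
    exact (Finset.prod_congr rfl fun t _ => (if_pos t.isLt).symm)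
  have heq : Epart M pi1 (j + 1) F = Epart M pi2 (j + 1) F := by
    refine Finset.sum_congr rfl fun T _ => ?_
    congr 2
    refine Finset.prod_congr rfl fun t _ => ?_
    by_cases h : (t : ℕ) < j + 1
    · rw [if_pos h, if_pos h]
      unfold fac
      rw [hag t (by omega)]
    · rw [if_neg h, if_neg h]
  have h1 := Epart_chain M hprew hptr pi1 hpi1 j F hFs hFa hFr (H - j) (j + 1)
    (by omega) (by omega)
  have h2 := Epart_chain M hprew hptr pi2 hpi2 j F hFs hFa hFr (H - j) (j + 1)
    (by omega) (by omega)
  have hc : ((Fintype.card A : ℝ) * ((Fintype.card S : ℝ) * (Fintype.card R : ℝ)))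
      ^ (H - j) ≠ 0 := by
    refine pow_ne_zero _ ?_
    have h1 : 0 < Fintype.card A := Fintype.card_pos
    have h2 : 0 < Fintype.card S := Fintype.card_pos
    have h3 : 0 < Fintype.card R := Fintype.card_pos
    positivity
  rw [htraj pi1, htraj pi2]
  have := heq
  rw [h1, h2] at this
  exact mul_left_cancel₀ hc this

lemma traj_hyb (M : Model S A R H D) (hpib : ∀ t s a, 0 < M.pib t s a)
    (θ' : Param D) (j : ℕ) (T : Traj S A R H) :
    M.pb T * M.nuUpto θ' (j + 1) T
      = M.traj (fun t => if (t : ℕ) < j + 1 then M.pit θ' t else M.pib t) T := by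
  show M.traj M.pib T * M.nuUpto θ' (j + 1) T = _
  rw [traj_eq_fac, traj_eq_fac]
  unfold Model.nuUpto
  rw [mul_assoc, ← Finset.prod_mul_distrib]
  congr 1
  refine Finset.prod_congr rfl fun t _ => ?_
  by_cases h : (t : ℕ) < j + 1
  · rw [if_pos h]
    simp only [fac, if_pos h, Model.nu]
    have hb : M.pib t (T.1 t.castSucc) (T.2.1 t) ≠ 0 := (hpib t _ _).ne'
    field_simp
  · rw [if_neg h]
    simp only [fac, if_neg h, mul_one]


section GradientTools

open InnerProductSpace

lemma toDual_smul_real {F : Type*} [NormedAddCommGroup F] [InnerProductSpace ℝ F]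
    [CompleteSpace F] (c : ℝ) (v : F) :
    toDual ℝ F (c • v) = c • toDual ℝ F v := by
  rw [map_smulₛₗ]
  congr 1

lemma hasGradientAt_finset_sum {F : Type*} [NormedAddCommGroup F]
    [InnerProductSpace ℝ F] [CompleteSpace F] {ι : Type*} (u : Finset ι)
    {f : ι → F → ℝ} {g : ι → F} {x : F}
    (h : ∀ i ∈ u, HasGradientAt (f i) (g i) x) :
    HasGradientAt (fun y => ∑ i ∈ u, f i y) (∑ i ∈ u, g i) x := by
  rw [hasGradientAt_iff_hasFDerivAt, map_sum]
  exact HasFDerivAt.fun_sum fun i hi => (h i hi).hasFDerivAt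

lemma HasGradientAt.const_mul' {F : Type*} [NormedAddCommGroup F]
    [InnerProductSpace ℝ F] [CompleteSpace F] {f : F → ℝ} {g x : F}
    (c : ℝ) (h : HasGradientAt f g x) :
    HasGradientAt (fun y => c * f y) (c • g) x := by
  rw [hasGradientAt_iff_hasFDerivAt, toDual_smul_real]
  exact h.hasFDerivAt.const_mul c

lemma hasGradientAt_log {F : Type*} [NormedAddCommGroup F]
    [InnerProductSpace ℝ F] [CompleteSpace F] {f : F → ℝ} {g x : F}
    (h : HasGradientAt f g x) (hx : f x ≠ 0) :
    HasGradientAt (fun y => Real.log (f y)) ((f x)⁻¹ • g) x := by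
  rw [hasGradientAt_iff_hasFDerivAt, toDual_smul_real]
  exact h.hasFDerivAt.log hx

end GradientTools

lemma score_eq (M : Model S A R H D) (θ : Param D)
    (hdiff : ∀ t s a, Differentiable ℝ fun θ' => M.pit θ' t s a)
    (hpit : ∀ θ' t s a, 0 < M.pit θ' t s a)
    (t : Fin (H + 1)) (s : S) (a : A) :
    M.score θ t s a
      = (M.pit θ t s a)⁻¹ • gradient (fun θ' => M.pit θ' t s a) θ := by
  have hd : HasGradientAt (fun θ' => M.pit θ' t s a)
      (gradient (fun θ' => M.pit θ' t s a) θ) θ := (hdiff t s a θ).hasGradientAt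
  exact (hasGradientAt_log hd (hpit θ t s a).ne').gradient

lemma hasGradientAt_nuUpto (M : Model S A R H D) (θ : Param D)
    (hdiff : ∀ t s a, Differentiable ℝ fun θ' => M.pit θ' t s a)
    (hpit : ∀ θ' t s a, 0 < M.pit θ' t s a)
    (hpib : ∀ t s a, 0 < M.pib t s a) (k : ℕ) (T : Traj S A R H) :
    HasGradientAt (fun θ' => M.nuUpto θ' k T)
      (M.nuUpto θ k T •
        ∑ l : Fin (H + 1), (if (l : ℕ) < k then M.scoreT θ l T else 0)) θ := by
  classical
  set f : Fin (H + 1) → Param D → ℝ := fun t θ' =>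
    if (t : ℕ) < k then M.nu θ' t T else 1 with hf
  set G : Fin (H + 1) → Param D := fun t =>
    if (t : ℕ) < k then
      (M.pib t (T.1 t.castSucc) (T.2.1 t))⁻¹ •
        gradient (fun θ' => M.pit θ' t (T.1 t.castSucc) (T.2.1 t)) θ
    else 0 with hG
  have hfd : ∀ t : Fin (H + 1), HasGradientAt (f t) (G t) θ := by
    intro t
    by_cases h : (t : ℕ) < k
    · simp only [hf, hG, if_pos h, Model.nu, div_eq_inv_mul]
      exact HasGradientAt.const_mul' _ (hdiff t _ _ θ).hasGradientAt
    · simp only [hf, hG, if_neg h]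
      exact hasGradientAt_const (c := (1 : ℝ)) (x := θ)
  have hprod : HasFDerivAt (fun θ' => ∏ t : Fin (H + 1), f t θ')
      (∑ t : Fin (H + 1), (∏ u ∈ Finset.univ.erase t, f u θ) •
        InnerProductSpace.toDual ℝ (Param D) (G t)) θ :=
    HasFDerivAt.finset_prod fun t _ => (hfd t).hasFDerivAt
  have hfun : (fun θ' => M.nuUpto θ' k T) = fun θ' => ∏ t : Fin (H + 1), f t θ' := rfl
  have hvec : ∑ t : Fin (H + 1), (∏ u ∈ Finset.univ.erase t, f u θ) •
      InnerProductSpace.toDual ℝ (Param D) (G t)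
      = InnerProductSpace.toDual ℝ (Param D)
          (M.nuUpto θ k T •
            ∑ l : Fin (H + 1), (if (l : ℕ) < k then M.scoreT θ l T else 0)) := by
    rw [toDual_smul_real, map_sum, Finset.smul_sum]
    refine Finset.sum_congr rfl fun t _ => ?_
    by_cases h : (t : ℕ) < k
    · have hps : M.pit θ t (T.1 t.castSucc) (T.2.1 t) ≠ 0 := (hpit θ t _ _).ne'
      have hbs : M.pib t (T.1 t.castSucc) (T.2.1 t) ≠ 0 := (hpib t _ _).ne'
      have hEN : (∏ u ∈ Finset.univ.erase t, f u θ) * f t θ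
          = M.nuUpto θ k T := Finset.prod_erase_mul _ _ (Finset.mem_univ t)
      have hft : f t θ = M.pit θ t (T.1 t.castSucc) (T.2.1 t) *
          (M.pib t (T.1 t.castSucc) (T.2.1 t))⁻¹ := by
        simp only [hf, if_pos h, Model.nu, div_eq_mul_inv]
      have hsc : (∏ u ∈ Finset.univ.erase t, f u θ) *
          (M.pib t (T.1 t.castSucc) (T.2.1 t))⁻¹
          = M.nuUpto θ k T * (M.pit θ t (T.1 t.castSucc) (T.2.1 t))⁻¹ := by
        rw [hft] at hEN
        have h2 : M.pit θ t (T.1 t.castSucc) (T.2.1 t) *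
            (M.pit θ t (T.1 t.castSucc) (T.2.1 t))⁻¹ = 1 := mul_inv_cancel₀ hps
        linear_combination (M.pit θ t (T.1 t.castSucc) (T.2.1 t))⁻¹ * hEN
          - (∏ u ∈ Finset.univ.erase t, f u θ) *
            (M.pib t (T.1 t.castSucc) (T.2.1 t))⁻¹ * h2
      simp only [hG, if_pos h, toDual_smul_real, Model.scoreT,
        score_eq M θ hdiff hpit]
      rw [smul_smul, smul_smul, hsc]
    · simp only [hG, if_neg h, map_zero, smul_zero]
  rw [hasGradientAt_iff_hasFDerivAt, hfun, ← hvec]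
  exact hprod

/-- Monte Carlo representation of the gradient of the marginal
state–action density ratio:
`∇_θ μ_j(s,a) = E_{p_{π^b}}[ν_{0:j} ∑_{ℓ=0}^j g_ℓ ∣ s_j = s, a_j = a]`. -/
theorem dmu_monte_carlo (M : Model S A R H D) (θ : Param D)
    (hvalid : M.Valid)
    (hdiff : ∀ t s a, Differentiable ℝ fun θ' => M.pit θ' t s a) :
    ∀ (j : Fin (H + 1)) (s : S) (a : A),
      M.dmu θ j s a =
        cexp M.pb (fun T => T.1 j.castSucc = s ∧ T.2.1 j = a)
          (fun T => M.nuUpto θ ((j : ℕ) + 1) T •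
            ∑ l : Fin (H + 1), (if (l : ℕ) ≤ (j : ℕ) then M.scoreT θ l T else 0)) := by
  intro j s a
  classical
  have hpos := hvalid.pb_marg_pos j s a
  have hTne : Nonempty (Traj S A R H) := by
    by_contra h
    rw [not_nonempty_iff] at h
    have h0 : jointProb M.pb j s a = 0 := by
      unfold jointProb
      rw [Finset.univ_eq_empty, Finset.sum_empty]
    rw [h0] at hpos
    exact lt_irrefl 0 hpos
  obtain ⟨T0⟩ := hTne
  have hS : Nonempty S := ⟨T0.1 0⟩
  have hA : Nonempty A := ⟨T0.2.1 0⟩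
  have hR : Nonempty R := ⟨T0.2.2 0⟩
  set c : ℝ := jointProb M.pb j s a with hc
  set F : Traj S A R H → ℝ :=
    fun T => if T.1 j.castSucc = s ∧ T.2.1 j = a then 1 else 0 with hF
  have hFs : ∀ T (i : Fin (H + 2)) x, (j : ℕ) < (i : ℕ) → F (updS T i x) = F T := by
    intro T i x hi
    have hne : j.castSucc ≠ i := by
      intro he; have := congrArg Fin.val he; rw [Fin.coe_castSucc] at this; omega
    simp only [hF, updS]
    simp only [Function.update_of_ne hne]
  have hFa : ∀ T (i : Fin (H + 1)) x, (j : ℕ) < (i : ℕ) → F (updA T i x) = F T := by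
    intro T i x hi
    have hne : j ≠ i := by
      intro he; have := congrArg Fin.val he; omega
    simp only [hF, updA]
    simp only [Function.update_of_ne hne]
  have hFr : ∀ T (i : Fin (H + 1)) x, (j : ℕ) < (i : ℕ) → F (updR T i x) = F T := by
    intro T i x _
    rfl
  have key : ∀ θ' : Param D, M.mufun θ' j s a
      = c⁻¹ * ∑ T : Traj S A R H, (if T.1 j.castSucc = s ∧ T.2.1 j = a
          then M.pb T * M.nuUpto θ' ((j : ℕ) + 1) T else 0) := by
    intro θ'
    unfold Model.mufun
    rw [div_eq_inv_mul, ← hc]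
    congr 1
    calc jointProb (M.pe θ') j s a
        = ∑ T : Traj S A R H, M.traj (M.pit θ') T * F T := by
          unfold jointProb
          refine Finset.sum_congr rfl fun T _ => ?_
          by_cases h : T.1 j.castSucc = s ∧ T.2.1 j = a
          · simp [hF, h, Model.pe]
          · simp [hF, h, Model.pe]
      _ = ∑ T : Traj S A R H, M.traj
            (fun t => if (t : ℕ) < (j : ℕ) + 1 then M.pit θ' t else M.pib t) T * F T := by
          refine sum_traj_policy_eq M hvalid.prew_sum hvalid.ptr_sum _ _
            (hvalid.pit_sum θ') ?_ (j : ℕ) (Nat.lt_succ_iff.mp j.isLt) ?_ F hFs hFa hFr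
          · intro t s'
            by_cases h : (t : ℕ) < (j : ℕ) + 1
            · simp only [if_pos h]; exact hvalid.pit_sum θ' t s'
            · simp only [if_neg h]; exact hvalid.pib_sum t s'
          · intro t ht
            rw [if_pos (by omega)]
      _ = ∑ T : Traj S A R H, (if T.1 j.castSucc = s ∧ T.2.1 j = a
            then M.pb T * M.nuUpto θ' ((j : ℕ) + 1) T else 0) := by
          refine Finset.sum_congr rfl fun T _ => ?_
          rw [← traj_hyb M hvalid.pib_pos θ' (j : ℕ) T]
          by_cases h : T.1 j.castSucc = s ∧ T.2.1 j = a
          · simp [hF, h]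
          · simp [hF, h]
  have hgrad : HasGradientAt (fun θ' => M.mufun θ' j s a)
      (c⁻¹ • ∑ T : Traj S A R H, (if T.1 j.castSucc = s ∧ T.2.1 j = a
        then M.pb T • (M.nuUpto θ ((j : ℕ) + 1) T •
          ∑ l : Fin (H + 1), (if (l : ℕ) ≤ (j : ℕ) then M.scoreT θ l T else 0))
        else 0)) θ := by
    have hfunx : (fun θ' => M.mufun θ' j s a)
        = fun θ' => c⁻¹ * ∑ T : Traj S A R H, (if T.1 j.castSucc = s ∧ T.2.1 j = a
            then M.pb T * M.nuUpto θ' ((j : ℕ) + 1) T else 0) := funext key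
    rw [hfunx]
    refine HasGradientAt.const_mul' _ ?_
    refine hasGradientAt_finset_sum Finset.univ ?_
    intro T _
    by_cases h : T.1 j.castSucc = s ∧ T.2.1 j = a
    · simp only [if_pos h]
      have h1 := hasGradientAt_nuUpto M θ hdiff hvalid.pit_pos hvalid.pib_pos
        ((j : ℕ) + 1) T
      have h2 := HasGradientAt.const_mul' (M.pb T) h1
      simpa [Nat.lt_succ_iff, smul_smul] using h2
    · simp only [if_neg h]
      exact hasGradientAt_const (c := (0 : ℝ)) (x := θ)
  rw [show M.dmu θ j s a = gradient (fun θ' => M.mufun θ' j s a) θ from rfl,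
    hgrad.gradient]
  unfold cexp
  congr 1
  · congr 1
    rw [hc]
    unfold jointProb
    refine Finset.sum_congr rfl fun T _ => ?_
    by_cases h : T.1 j.castSucc = s ∧ T.2.1 j = a
    · simp [h]
    · simp [h]
  · refine Finset.sum_congr rfl fun T _ => ?_
    by_cases h : T.1 j.castSucc = s ∧ T.2.1 j = a
    · simp [h]
    · simp [h]

end OPPG
end
end

section
/- (Theorem: Bellman equation for the gradient of the q-function.) Define d^q_j = ∇_θ q_j and d^v_j(s) = ∑_{a∈A} π^θ_j(a|s) ( d^q_j(s,a) + q_j(s,a) ∇_θ log π^θ_j(a|s) ) for 0 ≤ j ≤ H, and set d^v_{H+1} ≡ 0. Then: (i) d^v_j = ∇_θ v_j for every 0 ≤ j ≤ H; and (ii) for every 0 ≤ j ≤ H and every (s,a) ∈ S×A, d^q_j(s,a) = E_{p_{π^b}}[ d^v_{j+1}(s_{j+1}) | s_j = s, a_j = a ] (equivalently, d^q_j(s,a) = ∑_{s'} p_j(s'|s,a) d^v_{j+1}(s')). -/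
open Finset

noncomputable section

namespace OPPG

variable {S A R : Type} [Fintype S] [Fintype A] [Fintype R]
  [DecidableEq S] [DecidableEq A] [DecidableEq R] {H D : ℕ}

/-- `d^v_j(s) := ∑_a π^θ_j(a|s) (d^q_j(s,a) + q_j(s,a) ∇_θ log π^θ_j(a|s))`. -/
def Model.dvDef (M : Model S A R H D) (θ : Param D) (j : Fin (H + 1)) (s : S) : Param D :=
  ∑ a, M.pit θ j s a • (M.dq θ j s a + M.qfun θ j s a • M.score θ j s a)

/-- The extension of `dvDef` to index `H + 1`, with `d^v_{H+1} ≡ 0`. -/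
def Model.dvDefExt (M : Model S A R H D) (θ : Param D) (i : Fin (H + 2)) (s : S) : Param D :=
  if h : (i : ℕ) ≤ H then M.dvDef θ ⟨(i : ℕ), by omega⟩ s else 0
set_option linter.unusedSectionVars false
set_option maxHeartbeats 1000000

theorem sum_update_aux {ι X : Type*} [Fintype ι] [DecidableEq ι] [Fintype X] {E : Type*}
    [AddCommMonoid E] (F : (ι → X) → E) (i : ι) :
    ∑ g : ι → X, ∑ x : X, F (Function.update g i x) = (Fintype.card X) • ∑ g : ι → X, F g := by
  classical
  have h1 : ∑ g : ι → X, ∑ x : X, F (Function.update g i x)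
      = ∑ p : (ι → X) × X, F (Function.update p.1 i p.2) := by
    rw [Fintype.sum_prod_type]
  have h2 : ∑ p : (ι → X) × X, F (Function.update p.1 i p.2)
      = ∑ p : (ι → X) × X, F p.1 := by
    apply Fintype.sum_bijective (fun p : (ι → X) × X => (Function.update p.1 i p.2, p.1 i))
    · apply Function.Involutive.bijective
      intro p
      simp [Function.update_idem]
    · intro p; rfl
  rw [h1, h2, Fintype.sum_prod_type, ← Finset.sum_nsmul]
  simp [Finset.sum_const, card_univ]

section Machinery

variable {E : Type*} [AddCommMonoid E] [Module ℝ E]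

theorem sum_update_S (G : Traj S A R H → E) (i : Fin (H + 2)) :
    ∑ T : Traj S A R H, ∑ x : S, G (Function.update T.1 i x, T.2)
      = Fintype.card S • ∑ T : Traj S A R H, G T := by
  rw [Fintype.sum_prod_type, Fintype.sum_prod_type]
  calc ∑ σ : Fin (H+2) → S, ∑ q : (Fin (H+1) → A) × (Fin (H+1) → R), ∑ x : S,
        G (Function.update σ i x, q)
      = ∑ σ : Fin (H+2) → S, ∑ x : S, ∑ q : (Fin (H+1) → A) × (Fin (H+1) → R),
        G (Function.update σ i x, q) := by
        exact Finset.sum_congr rfl fun σ _ => Finset.sum_comm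
    _ = Fintype.card S • ∑ σ : Fin (H+2) → S, ∑ q : (Fin (H+1) → A) × (Fin (H+1) → R),
        G (σ, q) := sum_update_aux (fun σ => ∑ q, G (σ, q)) i

theorem sum_update_A (G : Traj S A R H → E) (i : Fin (H + 1)) :
    ∑ T : Traj S A R H, ∑ x : A, G (T.1, Function.update T.2.1 i x, T.2.2)
      = Fintype.card A • ∑ T : Traj S A R H, G T := by
  rw [Fintype.sum_prod_type, Fintype.sum_prod_type]
  have key : ∀ σ : Fin (H+2) → S,
      ∑ q : (Fin (H+1) → A) × (Fin (H+1) → R), ∑ x : A, G (σ, Function.update q.1 i x, q.2)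
        = Fintype.card A • ∑ q : (Fin (H+1) → A) × (Fin (H+1) → R), G (σ, q) := by
    intro σ
    rw [Fintype.sum_prod_type, Fintype.sum_prod_type]
    calc ∑ α : Fin (H+1) → A, ∑ ρ : Fin (H+1) → R, ∑ x : A,
          G (σ, Function.update α i x, ρ)
        = ∑ α : Fin (H+1) → A, ∑ x : A, ∑ ρ : Fin (H+1) → R,
          G (σ, Function.update α i x, ρ) := by
          exact Finset.sum_congr rfl fun α _ => Finset.sum_comm
      _ = Fintype.card A • ∑ α : Fin (H+1) → A, ∑ ρ : Fin (H+1) → R, G (σ, α, ρ) :=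
          sum_update_aux (fun α => ∑ ρ, G (σ, α, ρ)) i
  calc ∑ σ, ∑ q : (Fin (H+1) → A) × (Fin (H+1) → R), ∑ x : A, G (σ, Function.update q.1 i x, q.2)
      = ∑ σ, Fintype.card A • ∑ q : (Fin (H+1) → A) × (Fin (H+1) → R), G (σ, q) :=
        Finset.sum_congr rfl fun σ _ => key σ
    _ = Fintype.card A • ∑ σ, ∑ q : (Fin (H+1) → A) × (Fin (H+1) → R), G (σ, q) := by
        rw [Finset.smul_sum]

theorem sum_update_R (G : Traj S A R H → E) (i : Fin (H + 1)) :
    ∑ T : Traj S A R H, ∑ x : R, G (T.1, T.2.1, Function.update T.2.2 i x)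
      = Fintype.card R • ∑ T : Traj S A R H, G T := by
  rw [Fintype.sum_prod_type, Fintype.sum_prod_type]
  have key : ∀ σ : Fin (H+2) → S,
      ∑ q : (Fin (H+1) → A) × (Fin (H+1) → R), ∑ x : R, G (σ, q.1, Function.update q.2 i x)
        = Fintype.card R • ∑ q : (Fin (H+1) → A) × (Fin (H+1) → R), G (σ, q) := by
    intro σ
    rw [Fintype.sum_prod_type, Fintype.sum_prod_type]
    calc ∑ α : Fin (H+1) → A, ∑ ρ : Fin (H+1) → R, ∑ x : R, G (σ, α, Function.update ρ i x)
        = ∑ α : Fin (H+1) → A, Fintype.card R • ∑ ρ : Fin (H+1) → R, G (σ, α, ρ) :=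
          Finset.sum_congr rfl fun α _ => sum_update_aux (fun ρ => G (σ, α, ρ)) i
      _ = Fintype.card R • ∑ α : Fin (H+1) → A, ∑ ρ : Fin (H+1) → R, G (σ, α, ρ) := by
          rw [Finset.smul_sum]
  calc ∑ σ, ∑ q : (Fin (H+1) → A) × (Fin (H+1) → R), ∑ x : R, G (σ, q.1, Function.update q.2 i x)
      = ∑ σ, Fintype.card R • ∑ q : (Fin (H+1) → A) × (Fin (H+1) → R), G (σ, q) :=
        Finset.sum_congr rfl fun σ _ => key σ
    _ = Fintype.card R • ∑ σ, ∑ q : (Fin (H+1) → A) × (Fin (H+1) → R), G (σ, q) := by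
        rw [Finset.smul_sum]

theorem sum_update3 (m : Fin (H + 1)) (G : Traj S A R H → E) :
    (Fintype.card S * Fintype.card A * Fintype.card R) • ∑ T : Traj S A R H, G T
      = ∑ T : Traj S A R H, ∑ s' : S, ∑ a : A, ∑ r : R,
          G (Function.update T.1 m.succ s', Function.update T.2.1 m a,
             Function.update T.2.2 m r) := by
  have hR := sum_update_R G m
  have hA := sum_update_A (fun T => ∑ r : R, G (T.1, T.2.1, Function.update T.2.2 m r)) m
  have hS := sum_update_S (fun T => ∑ a : A, ∑ r : R,
      G (T.1, Function.update T.2.1 m a, Function.update T.2.2 m r)) m.succ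
  rw [mul_smul, mul_smul, ← hR, ← hA, ← hS]

/-- A trajectory function that depends only on states up to time `m` and
actions/rewards before time `m`. -/
def Adapted (m : ℕ) {E : Type*} (u : Traj S A R H → E) : Prop :=
  ∀ T T' : Traj S A R H,
    (∀ i : Fin (H + 2), (i : ℕ) ≤ m → T.1 i = T'.1 i) →
    (∀ t : Fin (H + 1), (t : ℕ) < m → T.2.1 t = T'.2.1 t) →
    (∀ t : Fin (H + 1), (t : ℕ) < m → T.2.2 t = T'.2.2 t) → u T = u T'

theorem Adapted.mono {m m' : ℕ} (h : m ≤ m') {E : Type*} {u : Traj S A R H → E}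
    (hu : Adapted m u) : Adapted m' u := by
  intro T T' h1 h2 h3
  exact hu T T' (fun i hi => h1 i (hi.trans h)) (fun t ht => h2 t (ht.trans_le h))
    (fun t ht => h3 t (ht.trans_le h))

theorem adapted_update3 {m : Fin (H + 1)} {E : Type*} {C : Traj S A R H → E}
    (hC : Adapted (m : ℕ) C) (T : Traj S A R H) (a : A) (r : R) (s' : S) :
    C (Function.update T.1 m.succ s', Function.update T.2.1 m a,
       Function.update T.2.2 m r) = C T := by
  apply hC
  · intro i hi
    exact Function.update_of_ne (Fin.ne_of_val_ne (by rw [Fin.val_succ]; omega)) _ _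
  · intro t ht
    exact Function.update_of_ne (Fin.ne_of_val_ne (by omega)) _ _
  · intro t ht
    exact Function.update_of_ne (Fin.ne_of_val_ne (by omega)) _ _

theorem block_sum1 (m : Fin (H + 1)) (C : Traj S A R H → ℝ) (hC : Adapted (m : ℕ) C)
    (f : S → A → R → S → E) :
    (Fintype.card S * Fintype.card A * Fintype.card R) •
      ∑ T : Traj S A R H, C T • f (T.1 m.castSucc) (T.2.1 m) (T.2.2 m) (T.1 m.succ)
    = ∑ T : Traj S A R H, C T • ∑ s' : S, ∑ a : A, ∑ r : R, f (T.1 m.castSucc) a r s' := by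
  rw [sum_update3 m]
  refine Finset.sum_congr rfl fun T _ => ?_
  rw [Finset.smul_sum]
  refine Finset.sum_congr rfl fun s' _ => ?_
  rw [Finset.smul_sum]
  refine Finset.sum_congr rfl fun a _ => ?_
  rw [Finset.smul_sum]
  refine Finset.sum_congr rfl fun r _ => ?_
  rw [adapted_update3 hC]
  have h1 : Function.update T.1 m.succ s' m.castSucc = T.1 m.castSucc :=
    Function.update_of_ne (Fin.castSucc_lt_succ : m.castSucc < m.succ).ne _ _
  simp [h1]

theorem block_sum2 (m : Fin (H + 1)) (C : Traj S A R H → E) (hC : Adapted (m : ℕ) C)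
    (w : S → A → R → S → ℝ) :
    (Fintype.card S * Fintype.card A * Fintype.card R) •
      ∑ T : Traj S A R H, w (T.1 m.castSucc) (T.2.1 m) (T.2.2 m) (T.1 m.succ) • C T
    = ∑ T : Traj S A R H, (∑ s' : S, ∑ a : A, ∑ r : R, w (T.1 m.castSucc) a r s') • C T := by
  rw [sum_update3 m]
  refine Finset.sum_congr rfl fun T _ => ?_
  rw [Finset.sum_smul]
  refine Finset.sum_congr rfl fun s' _ => ?_
  rw [Finset.sum_smul]
  refine Finset.sum_congr rfl fun a _ => ?_
  rw [Finset.sum_smul]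
  refine Finset.sum_congr rfl fun r _ => ?_
  rw [adapted_update3 hC]
  have h1 : Function.update T.1 m.succ s' m.castSucc = T.1 m.castSucc :=
    Function.update_of_ne (Fin.castSucc_lt_succ : m.castSucc < m.succ).ne _ _
  simp [h1]

end Machinery

section Value

variable (M : Model S A R H D)

/-- One factor of the trajectory density. -/
def Wt (pi : Fin (H + 1) → S → A → ℝ) (t : Fin (H + 1)) (T : Traj S A R H) : ℝ :=
  pi t (T.1 t.castSucc) (T.2.1 t) * M.prew t (T.1 t.castSucc) (T.2.1 t) (T.2.2 t) *
    M.ptr t (T.1 t.castSucc) (T.2.1 t) (T.1 t.succ)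

/-- The trajectory density truncated at time `m`. -/
def partialTraj (pi : Fin (H + 1) → S → A → ℝ) (m : ℕ) (T : Traj S A R H) : ℝ :=
  M.p0 (T.1 0) * ∏ t : Fin (H + 1), if (t : ℕ) < m then Wt M pi t T else 1

theorem traj_eq_partialTraj (pi : Fin (H + 1) → S → A → ℝ) :
    M.traj pi = partialTraj M pi (H + 1) := by
  funext T
  unfold Model.traj partialTraj Wt
  congr 1
  exact (Finset.prod_congr rfl fun t _ => by rw [if_pos t.isLt]).symm

theorem partialTraj_succ (pi : Fin (H + 1) → S → A → ℝ) (m : Fin (H + 1)) (T : Traj S A R H) :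
    partialTraj M pi ((m : ℕ) + 1) T = partialTraj M pi (m : ℕ) T * Wt M pi m T := by
  unfold partialTraj
  have h1 : ∏ t : Fin (H + 1), (if (t : ℕ) < (m : ℕ) + 1 then Wt M pi t T else 1)
      = Wt M pi m T * ∏ t ∈ univ.erase m, (if (t : ℕ) < (m : ℕ) + 1 then Wt M pi t T else 1) := by
    rw [← Finset.mul_prod_erase univ _ (mem_univ m), if_pos (by omega)]
  have h2 : ∏ t : Fin (H + 1), (if (t : ℕ) < (m : ℕ) then Wt M pi t T else 1)
      = ∏ t ∈ univ.erase m, (if (t : ℕ) < (m : ℕ) then Wt M pi t T else 1) := by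
    rw [← Finset.mul_prod_erase univ _ (mem_univ m), if_neg (by omega), one_mul]
  have h3 : ∀ t ∈ univ.erase m, (if (t : ℕ) < (m : ℕ) + 1 then Wt M pi t T else 1)
      = (if (t : ℕ) < (m : ℕ) then Wt M pi t T else 1) := by
    intro t ht
    have : t ≠ m := (Finset.mem_erase.mp ht).1
    have : (t : ℕ) ≠ (m : ℕ) := fun h => this (Fin.ext h)
    by_cases h : (t : ℕ) < (m : ℕ)
    · rw [if_pos (by omega), if_pos h]
    · rw [if_neg (by omega), if_neg h]
  rw [h1, Finset.prod_congr rfl h3, ← h2]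
  ring

theorem adapted_partialTraj (pi : Fin (H + 1) → S → A → ℝ) (m : ℕ) :
    Adapted m (partialTraj M pi m) := by
  intro T T' h1 h2 h3
  unfold partialTraj Wt
  have h0 : T.1 0 = T'.1 0 := h1 0 (by simp)
  rw [h0]
  congr 1
  apply Finset.prod_congr rfl
  intro t _
  by_cases ht : (t : ℕ) < m
  · rw [if_pos ht, if_pos ht, h1 t.castSucc (by simp; omega), h1 t.succ (by simp [Fin.val_succ]; omega),
      h2 t ht, h3 t ht]
  · rw [if_neg ht, if_neg ht]

/-- Bellman backup operator. -/
def Vstep (pi : Fin (H + 1) → S → A → ℝ) (t : Fin (H + 1)) (V : S → ℝ) (s : S) : ℝ :=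
  ∑ a, pi t s a * ((∑ r, M.prew t s a r * M.rval r) + ∑ s', M.ptr t s a s' * V s')

/-- The value function with `d` steps remaining. -/
def Vfrom (pi : Fin (H + 1) → S → A → ℝ) : ℕ → S → ℝ
  | 0 => fun _ => 0
  | (d + 1) => fun s => Vstep M pi ⟨H - d, by omega⟩ (Vfrom pi d) s

/-- The value function at time `m` (`0` for `m ≥ H + 1`). -/
def VV (pi : Fin (H + 1) → S → A → ℝ) (m : ℕ) : S → ℝ := Vfrom M pi (H + 1 - m)

theorem VV_top (pi : Fin (H + 1) → S → A → ℝ) (m : ℕ) (hm : H + 1 ≤ m) (s : S) :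
    VV M pi m s = 0 := by
  unfold VV
  rw [Nat.sub_eq_zero_of_le hm]
  rfl

theorem VV_eq (pi : Fin (H + 1) → S → A → ℝ) (m : Fin (H + 1)) (s : S) :
    VV M pi (m : ℕ) s = Vstep M pi m (VV M pi ((m : ℕ) + 1)) s := by
  have hm : (m : ℕ) ≤ H := by omega
  have h1 : H + 1 - (m : ℕ) = (H - (m : ℕ)) + 1 := by omega
  have h2 : H + 1 - ((m : ℕ) + 1) = H - (m : ℕ) := by omega
  unfold VV
  rw [h1, h2]
  have h3 : (⟨H - (H - (m : ℕ)), by omega⟩ : Fin (H + 1)) = m := Fin.ext (by simp; omega)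
  show Vstep M pi ⟨H - (H - (m : ℕ)), by omega⟩ (Vfrom M pi (H - (m : ℕ))) s = _
  rw [h3]

theorem cumRew_top (m : ℕ) (hm : H < m) (T : Traj S A R H) :
    cumRew M.rval m T = 0 := by
  unfold cumRew
  apply Finset.sum_eq_zero
  intro k _
  rw [if_neg (by have := k.isLt; omega)]

theorem cumRew_succ (m : ℕ) (hm : m ≤ H) (T : Traj S A R H) :
    cumRew M.rval m T
      = M.rval (T.2.2 ⟨m, by omega⟩) + cumRew M.rval (m + 1) T := by
  unfold cumRew
  have key : ∀ k : Fin (H + 1), (if m ≤ (k : ℕ) then M.rval (T.2.2 k) else 0)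
      = (if k = ⟨m, by omega⟩ then M.rval (T.2.2 k) else 0)
        + (if m + 1 ≤ (k : ℕ) then M.rval (T.2.2 k) else 0) := by
    intro k
    by_cases h1 : k = (⟨m, by omega⟩ : Fin (H + 1))
    · subst h1
      simp
    · have h2 : (k : ℕ) ≠ m := fun h => h1 (Fin.ext h)
      by_cases h3 : m ≤ (k : ℕ)
      · rw [if_pos h3, if_neg h1, if_pos (by omega), zero_add]
      · rw [if_neg h3, if_neg h1, if_neg (by omega), zero_add]
  rw [Finset.sum_congr rfl fun k _ => key k, Finset.sum_add_distrib]
  congr 1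
  rw [Finset.sum_ite_eq' univ]
  simp

theorem wsum_one (pi : Fin (H + 1) → S → A → ℝ) (hpisum : ∀ t s, ∑ a, pi t s a = 1)
    (hprew : ∀ t s a, ∑ r, M.prew t s a r = 1) (hptr : ∀ t s a, ∑ s', M.ptr t s a s' = 1)
    (t : Fin (H + 1)) (s : S) :
    ∑ s' : S, ∑ a : A, ∑ r : R, pi t s a * M.prew t s a r * M.ptr t s a s' = 1 := by
  have step1 : ∀ (s' : S) (a : A), ∑ r : R, pi t s a * M.prew t s a r * M.ptr t s a s'
      = pi t s a * M.ptr t s a s' := by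
    intro s' a
    have : ∀ r : R, pi t s a * M.prew t s a r * M.ptr t s a s'
        = M.prew t s a r * (pi t s a * M.ptr t s a s') := fun r => by ring
    rw [Finset.sum_congr rfl fun r _ => this r, ← Finset.sum_mul, hprew, one_mul]
  calc ∑ s' : S, ∑ a : A, ∑ r : R, pi t s a * M.prew t s a r * M.ptr t s a s'
      = ∑ s' : S, ∑ a : A, pi t s a * M.ptr t s a s' :=
        Finset.sum_congr rfl fun s' _ => Finset.sum_congr rfl fun a _ => step1 s' a
    _ = ∑ a : A, ∑ s' : S, pi t s a * M.ptr t s a s' := Finset.sum_comm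
    _ = ∑ a : A, pi t s a := Finset.sum_congr rfl fun a _ => by
        rw [← Finset.mul_sum, hptr, mul_one]
    _ = 1 := hpisum t s

end Value

section Main

variable (M : Model S A R H D)

theorem adapted_smul {E : Type*} [AddCommMonoid E] [Module ℝ E] {m : ℕ}
    {c : Traj S A R H → ℝ} {u : Traj S A R H → E}
    (hc : Adapted m c) (hu : Adapted m u) : Adapted m (fun T => c T • u T) := by
  intro T T' h1 h2 h3
  dsimp only
  rw [hc T T' h1 h2 h3, hu T T' h1 h2 h3]

theorem adapted_mul {m : ℕ} {c d : Traj S A R H → ℝ}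
    (hc : Adapted m c) (hd : Adapted m d) : Adapted m (fun T => c T * d T) := by
  intro T T' h1 h2 h3
  dsimp only
  rw [hc T T' h1 h2 h3, hd T T' h1 h2 h3]

/-- Tail-mass lemma: summing out the future of an adapted integrand. -/
theorem lemE {E : Type*} [AddCommMonoid E] [Module ℝ E] (pi : Fin (H + 1) → S → A → ℝ)
    (hpisum : ∀ t s, ∑ a, pi t s a = 1)
    (hprew : ∀ t s a, ∑ r, M.prew t s a r = 1) (hptr : ∀ t s a, ∑ s', M.ptr t s a s' = 1)
    (hcard : ((Fintype.card S * Fintype.card A * Fintype.card R : ℕ) : ℝ) ≠ 0) :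
    ∀ d m : ℕ, m + d = H + 1 → ∀ u : Traj S A R H → E, Adapted m u →
      ∑ T : Traj S A R H, M.traj pi T • u T
        = (((Fintype.card S * Fintype.card A * Fintype.card R : ℕ) : ℝ) ^ d)⁻¹ •
            ∑ T : Traj S A R H, partialTraj M pi m T • u T := by
  set κ : ℕ := Fintype.card S * Fintype.card A * Fintype.card R with hκ
  intro d
  induction d with
  | zero =>
    intro m hm u hu
    have hmeq : m = H + 1 := by omega
    subst hmeq
    rw [traj_eq_partialTraj]
    simp
  | succ d ih =>
    intro m hm u hu
    have hmlt : m < H + 1 := by omega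
    set mf : Fin (H + 1) := ⟨m, hmlt⟩ with hmf
    have h1 := ih (m + 1) (by omega) u (hu.mono (Nat.le_succ m))
    have hb := block_sum2 mf (fun T => partialTraj M pi m T • u T)
      (adapted_smul (adapted_partialTraj M pi m) hu)
      (fun s a r s' => pi mf s a * M.prew mf s a r * M.ptr mf s a s')
    have hsum1 : ∀ T : Traj S A R H,
        (∑ s' : S, ∑ a : A, ∑ r : R,
          pi mf (T.1 mf.castSucc) a * M.prew mf (T.1 mf.castSucc) a r
            * M.ptr mf (T.1 mf.castSucc) a s') = 1 :=
      fun T => wsum_one M pi hpisum hprew hptr mf (T.1 mf.castSucc)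
    have hb2 : (κ : ℝ) • ∑ T : Traj S A R H, partialTraj M pi (m + 1) T • u T
        = ∑ T : Traj S A R H, partialTraj M pi m T • u T := by
      have hl : ∑ T : Traj S A R H, partialTraj M pi (m + 1) T • u T
          = ∑ T : Traj S A R H,
            (pi mf (T.1 mf.castSucc) (T.2.1 mf) * M.prew mf (T.1 mf.castSucc) (T.2.1 mf) (T.2.2 mf)
              * M.ptr mf (T.1 mf.castSucc) (T.2.1 mf) (T.1 mf.succ)) •
              (partialTraj M pi m T • u T) := by
        refine Finset.sum_congr rfl fun T _ => ?_
        have := partialTraj_succ M pi mf T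
        rw [show partialTraj M pi (m + 1) T = partialTraj M pi ((mf : ℕ) + 1) T from rfl, this,
          mul_comm, mul_smul]
        rfl
      have hr : ∑ T : Traj S A R H,
          (∑ s' : S, ∑ a : A, ∑ r : R,
            pi mf (T.1 mf.castSucc) a * M.prew mf (T.1 mf.castSucc) a r
              * M.ptr mf (T.1 mf.castSucc) a s') • (partialTraj M pi m T • u T)
          = ∑ T : Traj S A R H, partialTraj M pi m T • u T := by
        refine Finset.sum_congr rfl fun T _ => ?_
        rw [hsum1 T, one_smul]
      calc (κ : ℝ) • ∑ T : Traj S A R H, partialTraj M pi (m + 1) T • u T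
          = (κ : ℕ) • ∑ T : Traj S A R H, partialTraj M pi (m + 1) T • u T := by
            rw [Nat.cast_smul_eq_nsmul]
        _ = ∑ T : Traj S A R H, partialTraj M pi m T • u T := by
            rw [hl]; rw [hb]; exact hr
    rw [h1, ← hb2, smul_smul, pow_succ]
    congr 1
    field_simp
end Main

section Main2

variable (M : Model S A R H D)

/-- One-step disintegration lemma. -/
theorem lemD {E : Type*} [AddCommMonoid E] [Module ℝ E] (pi : Fin (H + 1) → S → A → ℝ)
    (hpisum : ∀ t s, ∑ a, pi t s a = 1)
    (hprew : ∀ t s a, ∑ r, M.prew t s a r = 1) (hptr : ∀ t s a, ∑ s', M.ptr t s a s' = 1)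
    (hcard : ((Fintype.card S * Fintype.card A * Fintype.card R : ℕ) : ℝ) ≠ 0)
    (m : Fin (H + 1)) (u : Traj S A R H → ℝ) (hu : Adapted (m : ℕ) u)
    (f : S → A → R → S → E) :
    ∑ T : Traj S A R H, (M.traj pi T * u T) • f (T.1 m.castSucc) (T.2.1 m) (T.2.2 m) (T.1 m.succ)
      = ∑ T : Traj S A R H, (M.traj pi T * u T) •
          ∑ s' : S, ∑ a : A, ∑ r : R,
            (pi m (T.1 m.castSucc) a * M.prew m (T.1 m.castSucc) a r
              * M.ptr m (T.1 m.castSucc) a s') • f (T.1 m.castSucc) a r s' := by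
  classical
  have hvad : Adapted ((m : ℕ) + 1)
      (fun T : Traj S A R H => u T • f (T.1 m.castSucc) (T.2.1 m) (T.2.2 m) (T.1 m.succ)) := by
    intro T T' h1 h2 h3
    dsimp only
    rw [hu T T' (fun i hi => h1 i (by omega)) (fun t ht => h2 t (by omega))
      (fun t ht => h3 t (by omega)),
      h1 m.castSucc (by simp), h1 m.succ (by simp [Fin.val_succ]),
      h2 m (by omega), h3 m (by omega)]
  have hSgad : Adapted (m : ℕ) (fun T : Traj S A R H => u T •
      ∑ s' : S, ∑ a : A, ∑ r : R,
        (pi m (T.1 m.castSucc) a * M.prew m (T.1 m.castSucc) a r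
          * M.ptr m (T.1 m.castSucc) a s') • f (T.1 m.castSucc) a r s') := by
    intro T T' h1 h2 h3
    dsimp only
    rw [hu T T' h1 h2 h3, h1 m.castSucc (by simp)]
  have hle1 := lemE M pi hpisum hprew hptr hcard (H - (m : ℕ)) ((m : ℕ) + 1) (by omega) _ hvad
  have hle2 := lemE M pi hpisum hprew hptr hcard (H - (m : ℕ) + 1) (m : ℕ) (by omega) _ hSgad
  have hbs := block_sum1 m (fun T => partialTraj M pi (m : ℕ) T * u T)
    (adapted_mul (adapted_partialTraj M pi (m : ℕ)) hu)
    (fun s a r s' => (pi m s a * M.prew m s a r * M.ptr m s a s') • f s a r s')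
  have hid : ∑ T : Traj S A R H, partialTraj M pi ((m : ℕ) + 1) T •
        (u T • f (T.1 m.castSucc) (T.2.1 m) (T.2.2 m) (T.1 m.succ))
      = ∑ T : Traj S A R H, (partialTraj M pi (m : ℕ) T * u T) •
          ((pi m (T.1 m.castSucc) (T.2.1 m) * M.prew m (T.1 m.castSucc) (T.2.1 m) (T.2.2 m)
            * M.ptr m (T.1 m.castSucc) (T.2.1 m) (T.1 m.succ)) •
            f (T.1 m.castSucc) (T.2.1 m) (T.2.2 m) (T.1 m.succ)) := by
    refine Finset.sum_congr rfl fun T _ => ?_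
    rw [partialTraj_succ M pi m T, smul_smul, smul_smul]
    congr 1
    unfold Wt
    ring
  have hmid : ∑ T : Traj S A R H, partialTraj M pi (m : ℕ) T •
        (u T • ∑ s' : S, ∑ a : A, ∑ r : R,
          (pi m (T.1 m.castSucc) a * M.prew m (T.1 m.castSucc) a r
            * M.ptr m (T.1 m.castSucc) a s') • f (T.1 m.castSucc) a r s')
      = (Fintype.card S * Fintype.card A * Fintype.card R : ℕ) •
          ∑ T : Traj S A R H, partialTraj M pi ((m : ℕ) + 1) T •
            (u T • f (T.1 m.castSucc) (T.2.1 m) (T.2.2 m) (T.1 m.succ)) := by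
    have h8 : ∑ T : Traj S A R H, partialTraj M pi (m : ℕ) T •
          (u T • ∑ s' : S, ∑ a : A, ∑ r : R,
            (pi m (T.1 m.castSucc) a * M.prew m (T.1 m.castSucc) a r
              * M.ptr m (T.1 m.castSucc) a s') • f (T.1 m.castSucc) a r s')
        = ∑ T : Traj S A R H, (partialTraj M pi (m : ℕ) T * u T) •
            ∑ s' : S, ∑ a : A, ∑ r : R,
              (pi m (T.1 m.castSucc) a * M.prew m (T.1 m.castSucc) a r
                * M.ptr m (T.1 m.castSucc) a s') • f (T.1 m.castSucc) a r s' :=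
      Finset.sum_congr rfl fun T _ => by rw [smul_smul]
    rw [h8, ← hbs, hid]
  have hL : ∑ T : Traj S A R H, (M.traj pi T * u T) •
        f (T.1 m.castSucc) (T.2.1 m) (T.2.2 m) (T.1 m.succ)
      = ∑ T : Traj S A R H, M.traj pi T •
          (u T • f (T.1 m.castSucc) (T.2.1 m) (T.2.2 m) (T.1 m.succ)) :=
    Finset.sum_congr rfl fun T _ => by rw [mul_smul]
  have hR : ∑ T : Traj S A R H, (M.traj pi T * u T) •
        (∑ s' : S, ∑ a : A, ∑ r : R,
          (pi m (T.1 m.castSucc) a * M.prew m (T.1 m.castSucc) a r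
            * M.ptr m (T.1 m.castSucc) a s') • f (T.1 m.castSucc) a r s')
      = ∑ T : Traj S A R H, M.traj pi T •
          (u T • ∑ s' : S, ∑ a : A, ∑ r : R,
            (pi m (T.1 m.castSucc) a * M.prew m (T.1 m.castSucc) a r
              * M.ptr m (T.1 m.castSucc) a s') • f (T.1 m.castSucc) a r s') :=
    Finset.sum_congr rfl fun T _ => by rw [mul_smul]
  beta_reduce at hle1 hle2
  rw [hL, hR, hle1, hle2, hmid, ← Nat.cast_smul_eq_nsmul (R := ℝ), smul_smul]
  congr 1
  rw [pow_succ, mul_inv, inv_mul_cancel_right₀ hcard]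

theorem vstep_expand (pi : Fin (H + 1) → S → A → ℝ)
    (hprew : ∀ t s a, ∑ r, M.prew t s a r = 1) (hptr : ∀ t s a, ∑ s', M.ptr t s a s' = 1)
    (t : Fin (H + 1)) (s : S) (V : S → ℝ) :
    ∑ s' : S, ∑ a : A, ∑ r : R,
        (pi t s a * M.prew t s a r * M.ptr t s a s') * (M.rval r + V s')
      = Vstep M pi t V s := by
  rw [Finset.sum_comm]
  unfold Vstep
  refine Finset.sum_congr rfl fun a _ => ?_
  have hr : ∀ s' : S, ∑ r : R, (pi t s a * M.prew t s a r * M.ptr t s a s') * (M.rval r + V s')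
      = pi t s a * M.ptr t s a s' * ((∑ r, M.prew t s a r * M.rval r) + V s') := by
    intro s'
    have hterm : ∀ r : R, (pi t s a * M.prew t s a r * M.ptr t s a s') * (M.rval r + V s')
        = pi t s a * M.ptr t s a s' * (M.prew t s a r * M.rval r)
          + (pi t s a * M.ptr t s a s' * V s') * M.prew t s a r := fun r => by ring
    rw [Finset.sum_congr rfl fun r _ => hterm r, Finset.sum_add_distrib, ← Finset.mul_sum,
      ← Finset.mul_sum, hprew, mul_one]
    ring
  rw [Finset.sum_congr rfl fun s' _ => hr s']
  have hterm2 : ∀ s' : S, pi t s a * M.ptr t s a s' * ((∑ r, M.prew t s a r * M.rval r) + V s')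
      = (pi t s a * (∑ r, M.prew t s a r * M.rval r)) * M.ptr t s a s'
        + pi t s a * (M.ptr t s a s' * V s') := fun s' => by ring
  rw [Finset.sum_congr rfl fun s' _ => hterm2 s', Finset.sum_add_distrib, ← Finset.mul_sum,
    ← Finset.mul_sum, hptr, mul_one]
  ring

/-- Backward-induction value identity. -/
theorem claimC (pi : Fin (H + 1) → S → A → ℝ)
    (hpisum : ∀ t s, ∑ a, pi t s a = 1)
    (hprew : ∀ t s a, ∑ r, M.prew t s a r = 1) (hptr : ∀ t s a, ∑ s', M.ptr t s a s' = 1)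
    (hcard : ((Fintype.card S * Fintype.card A * Fintype.card R : ℕ) : ℝ) ≠ 0) :
    ∀ d m : ℕ, (hm : m + d = H + 1) → ∀ u : Traj S A R H → ℝ, Adapted m u →
      ∑ T : Traj S A R H, M.traj pi T * u T * cumRew M.rval m T
        = ∑ T : Traj S A R H, M.traj pi T * u T * VV M pi m (T.1 ⟨m, by omega⟩) := by
  intro d
  induction d with
  | zero =>
    intro m hm u hu
    have hmeq : m = H + 1 := by omega
    subst hmeq
    refine Finset.sum_congr rfl fun T _ => ?_
    rw [cumRew_top M (H + 1) (by omega) T, VV_top M pi (H + 1) le_rfl]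
  | succ d ih =>
    intro m hm u hu
    have hmlt : m < H + 1 := by omega
    set mf : Fin (H + 1) := ⟨m, hmlt⟩ with hmf
    have step1 : ∑ T : Traj S A R H, M.traj pi T * u T * cumRew M.rval m T
        = ∑ T : Traj S A R H, M.traj pi T * u T * M.rval (T.2.2 mf)
          + ∑ T : Traj S A R H, M.traj pi T * u T * cumRew M.rval (m + 1) T := by
      rw [← Finset.sum_add_distrib]
      refine Finset.sum_congr rfl fun T _ => ?_
      rw [cumRew_succ M m (by omega) T]
      ring
    have step2 := ih (m + 1) (by omega) u (hu.mono (Nat.le_succ m))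
    have step3 : ∑ T : Traj S A R H, M.traj pi T * u T * M.rval (T.2.2 mf)
          + ∑ T : Traj S A R H, M.traj pi T * u T
              * VV M pi (m + 1) (T.1 ⟨m + 1, by omega⟩)
        = ∑ T : Traj S A R H, (M.traj pi T * u T) •
            ((fun (x : S) (a : A) (r : R) (s' : S) => M.rval r + VV M pi (m + 1) s')
              (T.1 mf.castSucc) (T.2.1 mf) (T.2.2 mf) (T.1 mf.succ)) := by
      rw [← Finset.sum_add_distrib]
      refine Finset.sum_congr rfl fun T _ => ?_
      simp only [smul_eq_mul]
      have : T.1 (⟨m + 1, by omega⟩ : Fin (H + 2)) = T.1 mf.succ := rfl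
      rw [this]
      ring
    have step4 := lemD M pi hpisum hprew hptr hcard mf u hu
      (fun (x : S) (a : A) (r : R) (s' : S) => M.rval r + VV M pi (m + 1) s')
    have step5 : ∑ T : Traj S A R H, (M.traj pi T * u T) •
          (∑ s' : S, ∑ a : A, ∑ r : R,
            (pi mf (T.1 mf.castSucc) a * M.prew mf (T.1 mf.castSucc) a r
              * M.ptr mf (T.1 mf.castSucc) a s') • (M.rval r + VV M pi (m + 1) s'))
        = ∑ T : Traj S A R H, M.traj pi T * u T * VV M pi m (T.1 ⟨m, by omega⟩) := by
      refine Finset.sum_congr rfl fun T _ => ?_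
      simp only [smul_eq_mul]
      rw [vstep_expand M pi hprew hptr mf (T.1 mf.castSucc) (VV M pi (m + 1))]
      have h6 : T.1 (⟨m, by omega⟩ : Fin (H + 2)) = T.1 mf.castSucc := rfl
      rw [h6, ← VV_eq M pi mf (T.1 mf.castSucc)]
    rw [step1, step2, step3, step4, ← step5]

end Main2

section Keys

variable (M : Model S A R H D)

theorem indQ_expand {E : Type*} [AddCommMonoid E] [Module ℝ E] (pi : Fin (H + 1) → S → A → ℝ)
    (j : Fin (H + 1)) (s : S) (a : A) (g : R → S → E) (x : S) :
    ∑ s' : S, ∑ a' : A, ∑ r : R,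
        (pi j x a' * M.prew j x a' r * M.ptr j x a' s') •
          ((if x = s ∧ a' = a then (1 : ℝ) else 0) • g r s')
      = (if x = s then (1 : ℝ) else 0) •
          (pi j s a • ∑ s' : S, ∑ r : R, (M.prew j s a r * M.ptr j s a s') • g r s') := by
  classical
  by_cases hx : x = s
  · subst hx
    have h1 : ∀ a' : A, (∑ s' : S, ∑ r : R, (pi j x a' * M.prew j x a' r * M.ptr j x a' s') •
          ((if x = x ∧ a' = a then (1 : ℝ) else 0) • g r s'))
        = if a' = a then ∑ s' : S, ∑ r : R,
            (pi j x a * M.prew j x a r * M.ptr j x a s') • g r s' else 0 := by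
      intro a'
      by_cases ha : a' = a
      · subst ha
        simp
      · simp [ha]
    rw [Finset.sum_comm, Finset.sum_congr rfl fun a' _ => h1 a', Finset.sum_ite_eq' univ a]
    simp only [mem_univ, if_pos rfl, if_true, one_smul]
    rw [Finset.smul_sum]
    refine Finset.sum_congr rfl fun s' _ => ?_
    rw [Finset.smul_sum]
    refine Finset.sum_congr rfl fun r _ => ?_
    rw [smul_smul, mul_assoc]
  · simp [hx]

theorem keyMain {E : Type*} [AddCommMonoid E] [Module ℝ E] (pi : Fin (H + 1) → S → A → ℝ)
    (hpisum : ∀ t s, ∑ a, pi t s a = 1)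
    (hprew : ∀ t s a, ∑ r, M.prew t s a r = 1) (hptr : ∀ t s a, ∑ s', M.ptr t s a s' = 1)
    (hcard : ((Fintype.card S * Fintype.card A * Fintype.card R : ℕ) : ℝ) ≠ 0)
    (j : Fin (H + 1)) (s : S) (a : A) (g : R → S → E) :
    ∑ T : Traj S A R H,
        (M.traj pi T * (if T.1 j.castSucc = s ∧ T.2.1 j = a then (1 : ℝ) else 0)) •
          g (T.2.2 j) (T.1 j.succ)
      = (∑ T : Traj S A R H, M.traj pi T * (if T.1 j.castSucc = s then (1 : ℝ) else 0)) •
          (pi j s a • ∑ s' : S, ∑ r : R, (M.prew j s a r * M.ptr j s a s') • g r s') := by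
  classical
  have hone : Adapted (j : ℕ) (fun _ : Traj S A R H => (1 : ℝ)) := fun T T' _ _ _ => rfl
  have hD := lemD M pi hpisum hprew hptr hcard j _ hone
    (fun x a' r s' => (if x = s ∧ a' = a then (1 : ℝ) else 0) • g r s')
  have hL : ∑ T : Traj S A R H,
        (M.traj pi T * (if T.1 j.castSucc = s ∧ T.2.1 j = a then (1 : ℝ) else 0)) •
          g (T.2.2 j) (T.1 j.succ)
      = ∑ T : Traj S A R H, (M.traj pi T * (fun _ : Traj S A R H => (1 : ℝ)) T) •
          ((if T.1 j.castSucc = s ∧ T.2.1 j = a then (1 : ℝ) else 0) • g (T.2.2 j) (T.1 j.succ)) := by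
    refine Finset.sum_congr rfl fun T _ => ?_
    rw [smul_smul, mul_one]
  have hR : ∑ T : Traj S A R H, (M.traj pi T * (fun _ : Traj S A R H => (1 : ℝ)) T) •
        (∑ s' : S, ∑ a' : A, ∑ r : R,
          (pi j (T.1 j.castSucc) a' * M.prew j (T.1 j.castSucc) a' r
            * M.ptr j (T.1 j.castSucc) a' s') •
            ((if T.1 j.castSucc = s ∧ a' = a then (1 : ℝ) else 0) • g r s'))
      = (∑ T : Traj S A R H, M.traj pi T * (if T.1 j.castSucc = s then (1 : ℝ) else 0)) •
          (pi j s a • ∑ s' : S, ∑ r : R, (M.prew j s a r * M.ptr j s a s') • g r s') := by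
    rw [Finset.sum_smul]
    refine Finset.sum_congr rfl fun T _ => ?_
    rw [indQ_expand M pi j s a g (T.1 j.castSucc), smul_smul, mul_one]
  rw [hL, hD, hR]

theorem qq_expand (j : Fin (H + 1)) (s : S) (a : A)
    (hprew : ∀ t s a, ∑ r, M.prew t s a r = 1) (hptr : ∀ t s a, ∑ s', M.ptr t s a s' = 1)
    (V : S → ℝ) :
    ∑ s' : S, ∑ r : R, (M.prew j s a r * M.ptr j s a s') • (M.rval r + V s')
      = (∑ r, M.prew j s a r * M.rval r) + ∑ s', M.ptr j s a s' * V s' := by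
  simp only [smul_eq_mul]
  have h1 : ∀ s' : S, ∑ r : R, M.prew j s a r * M.ptr j s a s' * (M.rval r + V s')
      = M.ptr j s a s' * (∑ r, M.prew j s a r * M.rval r) + M.ptr j s a s' * V s' := by
    intro s'
    have hterm : ∀ r : R, M.prew j s a r * M.ptr j s a s' * (M.rval r + V s')
        = M.ptr j s a s' * (M.prew j s a r * M.rval r)
          + (M.ptr j s a s' * V s') * M.prew j s a r := fun r => by ring
    rw [Finset.sum_congr rfl fun r _ => hterm r, Finset.sum_add_distrib, ← Finset.mul_sum,
      ← Finset.mul_sum, hprew, mul_one]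
  rw [Finset.sum_congr rfl fun s' _ => h1 s', Finset.sum_add_distrib, ← Finset.sum_mul,
    hptr, one_mul]

theorem gsum_expand {E : Type*} [AddCommMonoid E] [Module ℝ E] (j : Fin (H + 1)) (s : S) (a : A)
    (hprew : ∀ t s a, ∑ r, M.prew t s a r = 1) (gg : S → E) :
    ∑ s' : S, ∑ r : R, (M.prew j s a r * M.ptr j s a s') • gg s'
      = ∑ s' : S, M.ptr j s a s' • gg s' := by
  refine Finset.sum_congr rfl fun s' _ => ?_
  rw [← Finset.sum_smul, ← Finset.sum_mul, hprew, one_mul]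

end Keys

section Closed

variable (M : Model S A R H D)

/-- Closed-form `q`-function. -/
def Qq (pi : Fin (H + 1) → S → A → ℝ) (j : Fin (H + 1)) (s : S) (a : A) : ℝ :=
  (∑ r, M.prew j s a r * M.rval r) + ∑ s', M.ptr j s a s' * VV M pi ((j : ℕ) + 1) s'

theorem traj_nonneg (pi : Fin (H + 1) → S → A → ℝ) (hp0 : ∀ s, 0 ≤ M.p0 s)
    (hprew : ∀ t s a r, 0 ≤ M.prew t s a r) (hptr : ∀ t s a s', 0 ≤ M.ptr t s a s')
    (hpi : ∀ t s a, 0 ≤ pi t s a) (T : Traj S A R H) : 0 ≤ M.traj pi T :=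
  mul_nonneg (hp0 _) (Finset.prod_nonneg fun t _ =>
    mul_nonneg (mul_nonneg (hpi _ _ _) (hprew _ _ _ _)) (hptr _ _ _ _))

theorem pe_pos_of_pb_pos (hvalid : M.Valid) (θ' : Param D) (T : Traj S A R H)
    (h : 0 < M.pb T) : 0 < M.pe θ' T := by
  have hne : M.pb T ≠ 0 := ne_of_gt h
  unfold Model.pb Model.traj at hne
  rw [mul_ne_zero_iff] at hne
  obtain ⟨hp0, hprod⟩ := hne
  rw [Finset.prod_ne_zero_iff] at hprod
  have hfac : ∀ t : Fin (H + 1),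
      M.prew t (T.1 t.castSucc) (T.2.1 t) (T.2.2 t) ≠ 0 ∧
      M.ptr t (T.1 t.castSucc) (T.2.1 t) (T.1 t.succ) ≠ 0 := by
    intro t
    have := hprod t (mem_univ t)
    rw [mul_ne_zero_iff, mul_ne_zero_iff] at this
    exact ⟨this.1.2, this.2⟩
  unfold Model.pe Model.traj
  apply mul_pos (lt_of_le_of_ne (hvalid.p0_nonneg _) (Ne.symm hp0))
  apply Finset.prod_pos
  intro t _
  exact mul_pos (mul_pos (hvalid.pit_pos θ' t _ _)
    (lt_of_le_of_ne (hvalid.prew_nonneg _ _ _ _) (Ne.symm (hfac t).1)))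
    (lt_of_le_of_ne (hvalid.ptr_nonneg _ _ _ _) (Ne.symm (hfac t).2))

theorem exists_pb_pos (hvalid : M.Valid) (j : Fin (H + 1)) (s : S) (a : A) :
    ∃ T : Traj S A R H, 0 < M.pb T ∧ T.1 j.castSucc = s ∧ T.2.1 j = a := by
  classical
  have hpos := hvalid.pb_marg_pos j s a
  unfold jointProb at hpos
  have hex : ∃ T : Traj S A R H,
      (0 : ℝ) < (if T.1 j.castSucc = s ∧ T.2.1 j = a then M.pb T else 0) := by
    by_contra hc
    push_neg at hc
    have : (∑ T : Traj S A R H,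
        if T.1 j.castSucc = s ∧ T.2.1 j = a then M.pb T else 0) ≤ 0 :=
      Finset.sum_nonpos fun T _ => hc T
    linarith
  obtain ⟨T, hT⟩ := hex
  by_cases hc : T.1 j.castSucc = s ∧ T.2.1 j = a
  · exact ⟨T, by rwa [if_pos hc] at hT, hc⟩
  · rw [if_neg hc] at hT; linarith

theorem prS_pos (hvalid : M.Valid) (θ' : Param D) (j : Fin (H + 1)) (s : S) (a : A) :
    0 < ∑ T : Traj S A R H, M.pe θ' T * (if T.1 j.castSucc = s then (1 : ℝ) else 0) := by
  classical
  obtain ⟨T0, hT0, hc, _⟩ := exists_pb_pos M hvalid j s a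
  apply Finset.sum_pos'
  · intro T _
    apply mul_nonneg
    · exact traj_nonneg M _ hvalid.p0_nonneg hvalid.prew_nonneg hvalid.ptr_nonneg
        (fun t s a => le_of_lt (hvalid.pit_pos θ' t s a)) T
    · split_ifs <;> norm_num
  · refine ⟨T0, mem_univ _, ?_⟩
    rw [if_pos hc, mul_one]
    exact pe_pos_of_pb_pos M hvalid θ' T0 hT0

theorem prSA_pos (hvalid : M.Valid) (θ' : Param D) (j : Fin (H + 1)) (s : S) (a : A) :
    0 < ∑ T : Traj S A R H,
      M.pe θ' T * (if T.1 j.castSucc = s ∧ T.2.1 j = a then (1 : ℝ) else 0) := by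
  classical
  obtain ⟨T0, hT0, hc1, hc2⟩ := exists_pb_pos M hvalid j s a
  apply Finset.sum_pos'
  · intro T _
    apply mul_nonneg
    · exact traj_nonneg M _ hvalid.p0_nonneg hvalid.prew_nonneg hvalid.ptr_nonneg
        (fun t s a => le_of_lt (hvalid.pit_pos θ' t s a)) T
    · split_ifs <;> norm_num
  · refine ⟨T0, mem_univ _, ?_⟩
    rw [if_pos ⟨hc1, hc2⟩, mul_one]
    exact pe_pos_of_pb_pos M hvalid θ' T0 hT0

theorem prSA_pb_pos (hvalid : M.Valid) (j : Fin (H + 1)) (s : S) (a : A) :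
    0 < ∑ T : Traj S A R H,
      M.pb T * (if T.1 j.castSucc = s ∧ T.2.1 j = a then (1 : ℝ) else 0) := by
  classical
  have hpos := hvalid.pb_marg_pos j s a
  unfold jointProb at hpos
  calc (0:ℝ) < ∑ T : Traj S A R H,
        if T.1 j.castSucc = s ∧ T.2.1 j = a then M.pb T else 0 := hpos
    _ = ∑ T : Traj S A R H,
        M.pb T * (if T.1 j.castSucc = s ∧ T.2.1 j = a then (1 : ℝ) else 0) := by
      refine Finset.sum_congr rfl fun T _ => ?_
      by_cases h : T.1 j.castSucc = s ∧ T.2.1 j = a <;> simp [h]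

theorem nonempty_S (hvalid : M.Valid) : Nonempty S := by
  by_contra h
  haveI := not_nonempty_iff.mp h
  have := hvalid.p0_sum
  simp [Finset.univ_eq_empty] at this

theorem nonempty_A (hvalid : M.Valid) : Nonempty A := by
  by_contra h
  haveI := not_nonempty_iff.mp h
  obtain ⟨s⟩ := nonempty_S M hvalid
  have := hvalid.pib_sum 0 s
  simp [Finset.univ_eq_empty] at this

theorem nonempty_R (hvalid : M.Valid) : Nonempty R := by
  by_contra h
  haveI := not_nonempty_iff.mp h
  obtain ⟨s⟩ := nonempty_S M hvalid
  obtain ⟨a⟩ := nonempty_A M hvalid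
  have := hvalid.prew_sum 0 s a
  simp [Finset.univ_eq_empty] at this

theorem card_ne_zero (hvalid : M.Valid) :
    ((Fintype.card S * Fintype.card A * Fintype.card R : ℕ) : ℝ) ≠ 0 := by
  have h1 := nonempty_S M hvalid
  have h2 := nonempty_A M hvalid
  have h3 := nonempty_R M hvalid
  have c1 : 0 < Fintype.card S := @Fintype.card_pos S _ h1
  have c2 : 0 < Fintype.card A := @Fintype.card_pos A _ h2
  have c3 : 0 < Fintype.card R := @Fintype.card_pos R _ h3
  have : 0 < Fintype.card S * Fintype.card A * Fintype.card R := by positivity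
  exact_mod_cast Nat.pos_iff_ne_zero.mp this

theorem adapted_uSA (j : Fin (H + 1)) (s : S) (a : A) :
    Adapted ((j : ℕ) + 1)
      (fun T : Traj S A R H => if T.1 j.castSucc = s ∧ T.2.1 j = a then (1 : ℝ) else 0) := by
  intro T T' h1 h2 h3
  dsimp only
  rw [h1 j.castSucc (by simp), h2 j (by omega)]

theorem adapted_uS (j : Fin (H + 1)) (s : S) :
    Adapted (j : ℕ) (fun T : Traj S A R H => if T.1 j.castSucc = s then (1 : ℝ) else 0) := by
  intro T T' h1 h2 h3
  dsimp only
  rw [h1 j.castSucc (by simp)]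

/-- Closed form of the `q`-function. -/
theorem qfun_eq (hvalid : M.Valid) (θ' : Param D) (j : Fin (H + 1)) (s : S) (a : A) :
    M.qfun θ' j s a = Qq M (M.pit θ') j s a := by
  classical
  have hcard := card_ne_zero M hvalid
  have hpisum := hvalid.pit_sum θ'
  have hprew := hvalid.prew_sum
  have hptr := hvalid.ptr_sum
  set uSA : Traj S A R H → ℝ :=
    fun T => if T.1 j.castSucc = s ∧ T.2.1 j = a then (1 : ℝ) else 0 with huSA
  set P : ℝ := ∑ T : Traj S A R H, M.traj (M.pit θ') T * uSA T with hP
  set P' : ℝ := ∑ T : Traj S A R H,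
    M.traj (M.pit θ') T * (if T.1 j.castSucc = s then (1 : ℝ) else 0) with hP'
  have hsplit : ∑ T : Traj S A R H, M.traj (M.pit θ') T * uSA T * cumRew M.rval (j : ℕ) T
      = ∑ T : Traj S A R H, (M.traj (M.pit θ') T * uSA T) •
          ((fun (r : R) (s' : S) => M.rval r + VV M (M.pit θ') ((j : ℕ) + 1) s')
            (T.2.2 j) (T.1 j.succ)) := by
    have hcc := claimC M (M.pit θ') hpisum hprew hptr hcard (H - (j : ℕ)) ((j : ℕ) + 1)
      (by omega) uSA (adapted_uSA j s a)
    have hstep : ∑ T : Traj S A R H, M.traj (M.pit θ') T * uSA T * cumRew M.rval (j : ℕ) T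
        = ∑ T : Traj S A R H, M.traj (M.pit θ') T * uSA T * M.rval (T.2.2 j)
          + ∑ T : Traj S A R H, M.traj (M.pit θ') T * uSA T * cumRew M.rval ((j : ℕ) + 1) T := by
      rw [← Finset.sum_add_distrib]
      refine Finset.sum_congr rfl fun T _ => ?_
      rw [cumRew_succ M (j : ℕ) (by omega) T]
      have : T.2.2 (⟨(j : ℕ), by omega⟩ : Fin (H + 1)) = T.2.2 j := rfl
      rw [this]
      ring
    rw [hstep]
    show _ = ∑ T : Traj S A R H, (M.traj (M.pit θ') T * uSA T) •
        (M.rval (T.2.2 j) + VV M (M.pit θ') ((j : ℕ) + 1) (T.1 j.succ))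
    have : ∀ T : Traj S A R H,
        T.1 (⟨(j : ℕ) + 1, by omega⟩ : Fin (H + 2)) = T.1 j.succ := fun T => rfl
    rw [show (∑ T : Traj S A R H, M.traj (M.pit θ') T * uSA T * cumRew M.rval ((j : ℕ) + 1) T)
        = ∑ T : Traj S A R H, M.traj (M.pit θ') T * uSA T
            * VV M (M.pit θ') ((j : ℕ) + 1) (T.1 j.succ) from by
      rw [hcc]; exact Finset.sum_congr rfl fun T _ => by rw [this T]]
    rw [← Finset.sum_add_distrib]
    refine Finset.sum_congr rfl fun T _ => ?_
    simp only [smul_eq_mul]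
    ring
  have hkey := keyMain M (M.pit θ') hpisum hprew hptr hcard j s a
    (fun (r : R) (s' : S) => M.rval r + VV M (M.pit θ') ((j : ℕ) + 1) s')
  have hkey1 := keyMain M (M.pit θ') hpisum hprew hptr hcard j s a
    (fun (_ : R) (_ : S) => (1 : ℝ))
  have hnum : ∑ T : Traj S A R H, M.traj (M.pit θ') T * uSA T * cumRew M.rval (j : ℕ) T
      = P' * (M.pit θ' j s a * Qq M (M.pit θ') j s a) := by
    rw [hsplit, hkey, qq_expand M j s a hprew hptr]
    simp only [smul_eq_mul]
    rfl
  have hden : P = P' * M.pit θ' j s a := by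
    rw [hP]
    calc ∑ T : Traj S A R H, M.traj (M.pit θ') T * uSA T
        = ∑ T : Traj S A R H, (M.traj (M.pit θ') T * uSA T) •
            ((fun (_ : R) (_ : S) => (1:ℝ)) (T.2.2 j) (T.1 j.succ)) := by
          refine Finset.sum_congr rfl fun T _ => by simp
      _ = P' * M.pit θ' j s a := by
          rw [hkey1, gsum_expand M j s a hprew (fun _ => (1:ℝ))]
          simp only [smul_eq_mul]
          rw [show ∑ s' : S, M.ptr j s a s' * 1 = 1 from by
            simp only [mul_one]; exact hptr j s a]
          rw [mul_one]
  have hPpos : 0 < P := by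
    have := prSA_pos M hvalid θ' j s a
    simpa [Model.pe, hP, huSA] using this
  unfold Model.qfun cexp
  simp only [Model.pe]
  have e1 : (∑ T : Traj S A R H,
      if T.1 j.castSucc = s ∧ T.2.1 j = a then M.traj (M.pit θ') T else 0) = P := by
    rw [hP]
    refine Finset.sum_congr rfl fun T _ => ?_
    by_cases h : T.1 j.castSucc = s ∧ T.2.1 j = a <;> simp [h, huSA]
  have e2 : (∑ T : Traj S A R H,
      if T.1 j.castSucc = s ∧ T.2.1 j = a then M.traj (M.pit θ') T • cumRew M.rval (j : ℕ) T else 0)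
      = ∑ T : Traj S A R H, M.traj (M.pit θ') T * uSA T * cumRew M.rval (j : ℕ) T := by
    refine Finset.sum_congr rfl fun T _ => ?_
    by_cases h : T.1 j.castSucc = s ∧ T.2.1 j = a <;> simp [h, huSA]
  suffices key : P⁻¹ • (∑ T : Traj S A R H, M.traj (M.pit θ') T * uSA T * cumRew M.rval (j : ℕ) T) = Qq M (M.pit θ') j s a by
    rw [← e1, ← e2] at key
    convert key
  rw [hnum, smul_eq_mul, hden]
  have hpit : M.pit θ' j s a ≠ 0 := ne_of_gt (hvalid.pit_pos θ' j s a)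
  have hP'ne : P' ≠ 0 := by
    intro h0
    rw [hden, h0, zero_mul] at hPpos
    exact lt_irrefl 0 hPpos
  field_simp

/-- Closed form of the `v`-function. -/
theorem vfun_eq (hvalid : M.Valid) (θ' : Param D) (j : Fin (H + 1)) (s : S) :
    M.vfun θ' j.castSucc s = VV M (M.pit θ') (j : ℕ) s := by
  classical
  have hcard := card_ne_zero M hvalid
  have hpisum := hvalid.pit_sum θ'
  set uS : Traj S A R H → ℝ :=
    fun T => if T.1 j.castSucc = s then (1 : ℝ) else 0 with huS
  set P' : ℝ := ∑ T : Traj S A R H, M.traj (M.pit θ') T * uS T with hP'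
  obtain ⟨a0⟩ := nonempty_A M hvalid
  have hP'pos : 0 < P' := by
    have := prS_pos M hvalid θ' j s a0
    simpa [Model.pe, hP', huS] using this
  have hcc := claimC M (M.pit θ') hpisum hvalid.prew_sum hvalid.ptr_sum hcard
    (H + 1 - (j : ℕ)) (j : ℕ) (by omega) uS (adapted_uS j s)
  have hnum : ∑ T : Traj S A R H, M.traj (M.pit θ') T * uS T * cumRew M.rval (j : ℕ) T
      = VV M (M.pit θ') (j : ℕ) s * P' := by
    rw [hcc, hP', Finset.mul_sum]
    refine Finset.sum_congr rfl fun T _ => ?_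
    have hind : T.1 (⟨(j : ℕ), by omega⟩ : Fin (H + 2)) = T.1 j.castSucc := rfl
    by_cases h : T.1 j.castSucc = s
    · rw [hind, h]
      simp [huS, h]
      ring
    · simp [huS, h]
  unfold Model.vfun
  rw [if_pos (show ((j.castSucc : Fin (H + 2)) : ℕ) ≤ H by
    rw [Fin.coe_castSucc]; omega)]
  unfold cexp
  simp only [Model.pe]
  have e1 : (∑ T : Traj S A R H, if T.1 j.castSucc = s then M.traj (M.pit θ') T else 0) = P' := by
    rw [hP']
    refine Finset.sum_congr rfl fun T _ => ?_
    by_cases h : T.1 j.castSucc = s <;> simp [h, huS]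
  have e2 : (∑ T : Traj S A R H,
      if T.1 j.castSucc = s then M.traj (M.pit θ') T • cumRew M.rval ((j.castSucc : Fin (H+2)) : ℕ) T else 0)
      = ∑ T : Traj S A R H, M.traj (M.pit θ') T * uS T * cumRew M.rval (j : ℕ) T := by
    refine Finset.sum_congr rfl fun T _ => ?_
    have hcast : ((j.castSucc : Fin (H+2)) : ℕ) = (j : ℕ) := Fin.coe_castSucc j
    rw [hcast]
    by_cases h : T.1 j.castSucc = s <;> simp [h, huS]
  suffices key : P'⁻¹ • (∑ T : Traj S A R H, M.traj (M.pit θ') T * uS T * cumRew M.rval (j : ℕ) T) = VV M (M.pit θ') (j : ℕ) s by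
    rw [← e1, ← e2] at key
    convert key
  rw [hnum, smul_eq_mul]
  field_simp

end Closed

section Grad

variable (M : Model S A R H D)

theorem grad_add {f g : Param D → ℝ} {θ : Param D} (hf : DifferentiableAt ℝ f θ)
    (hg : DifferentiableAt ℝ g θ) :
    gradient (fun x => f x + g x) θ = gradient f θ + gradient g θ := by
  unfold gradient
  rw [fderiv_fun_add hf hg, map_add]

theorem grad_const (c : ℝ) (θ : Param D) : gradient (fun _ : Param D => c) θ = 0 := by
  unfold gradient
  simp

theorem grad_sum {ι : Type*} (s : Finset ι) (f : ι → Param D → ℝ) (θ : Param D)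
    (hf : ∀ i ∈ s, DifferentiableAt ℝ (f i) θ) :
    gradient (fun x => ∑ i ∈ s, f i x) θ = ∑ i ∈ s, gradient (f i) θ := by
  classical
  induction s using Finset.induction with
  | empty => simpa using grad_const 0 θ
  | @insert a s hni ih =>
    have h1 : (fun x => ∑ i ∈ insert a s, f i x) = fun x => f a x + ∑ i ∈ s, f i x := by
      funext x
      rw [Finset.sum_insert hni]
    rw [h1, Finset.sum_insert hni,
      grad_add (hf a (Finset.mem_insert_self a s))
        (DifferentiableAt.fun_sum fun i hi => hf i (Finset.mem_insert_of_mem hi)),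
      ih fun i hi => hf i (Finset.mem_insert_of_mem hi)]

theorem grad_mul {f g : Param D → ℝ} {θ : Param D} (hf : DifferentiableAt ℝ f θ)
    (hg : DifferentiableAt ℝ g θ) :
    gradient (fun x => f x * g x) θ = f θ • gradient g θ + g θ • gradient f θ := by
  unfold gradient
  rw [fderiv_fun_mul hf hg, map_add, map_smul, map_smul]

theorem grad_const_mul {f : Param D → ℝ} {θ : Param D} (c : ℝ) (hf : DifferentiableAt ℝ f θ) :
    gradient (fun x => c * f x) θ = c • gradient f θ := by
  unfold gradient
  rw [fderiv_const_mul hf, map_smul]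

theorem diff_Vfrom (hdiff : ∀ t s a, Differentiable ℝ fun θ' => M.pit θ' t s a) :
    ∀ (d : ℕ) (s : S), Differentiable ℝ (fun θ' => Vfrom M (M.pit θ') d s) := by
  intro d
  induction d with
  | zero =>
    intro s
    simp only [Vfrom]
    exact differentiable_const 0
  | succ d ih =>
    intro s
    have h1 : (fun θ' => Vfrom M (M.pit θ') (d + 1) s)
        = fun θ' => ∑ a, M.pit θ' ⟨H - d, by omega⟩ s a *
            ((∑ r, M.prew ⟨H - d, by omega⟩ s a r * M.rval r)
              + ∑ s', M.ptr ⟨H - d, by omega⟩ s a s' * Vfrom M (M.pit θ') d s') := by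
      funext θ'
      simp only [Vfrom, Vstep]
    rw [h1]
    apply Differentiable.fun_sum
    intro a _
    exact (hdiff _ _ _).mul ((differentiable_const _).add
      (Differentiable.fun_sum fun s' _ => (ih s').const_mul _))

theorem diff_VV (hdiff : ∀ t s a, Differentiable ℝ fun θ' => M.pit θ' t s a) (m : ℕ) (s : S) :
    Differentiable ℝ (fun θ' => VV M (M.pit θ') m s) :=
  diff_Vfrom M hdiff (H + 1 - m) s

theorem diff_Qq (hdiff : ∀ t s a, Differentiable ℝ fun θ' => M.pit θ' t s a)
    (j : Fin (H + 1)) (s : S) (a : A) :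
    Differentiable ℝ (fun θ' => Qq M (M.pit θ') j s a) := by
  show Differentiable ℝ (fun θ' => (∑ r, M.prew j s a r * M.rval r)
      + ∑ s', M.ptr j s a s' * VV M (M.pit θ') ((j : ℕ) + 1) s')
  exact (differentiable_const _).add
    (Differentiable.fun_sum fun s' _ => (diff_VV M hdiff ((j : ℕ) + 1) s').const_mul _)

theorem pit_smul_score (hdiff : ∀ t s a, Differentiable ℝ fun θ' => M.pit θ' t s a)
    (hpos : ∀ θ' t s a, 0 < M.pit θ' t s a) (θ : Param D) (t : Fin (H + 1)) (s : S) (a : A) :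
    M.pit θ t s a • M.score θ t s a = gradient (fun θ' => M.pit θ' t s a) θ := by
  unfold Model.score gradient
  have hfd := ((hdiff t s a) θ).hasFDerivAt.log (ne_of_gt (hpos θ t s a))
  rw [hfd.fderiv, map_smul, smul_smul, mul_inv_cancel₀ (ne_of_gt (hpos θ t s a)), one_smul]

theorem grad_VV (hvalid : M.Valid) (hdiff : ∀ t s a, Differentiable ℝ fun θ' => M.pit θ' t s a)
    (θ : Param D) (j : Fin (H + 1)) (s : S) :
    gradient (fun θ' => VV M (M.pit θ') (j : ℕ) s) θ = M.dvDef θ j s := by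
  have hfun : (fun θ' => VV M (M.pit θ') (j : ℕ) s)
      = fun θ' => ∑ a, M.pit θ' j s a * Qq M (M.pit θ') j s a := by
    funext θ'
    rw [VV_eq M (M.pit θ') j s]
    rfl
  rw [hfun]
  have hdiffQ : ∀ a, DifferentiableAt ℝ (fun θ' => Qq M (M.pit θ') j s a) θ :=
    fun a => (diff_Qq M hdiff j s a) θ
  rw [grad_sum _ (fun a θ' => M.pit θ' j s a * Qq M (M.pit θ') j s a) _ (fun a _ => ((hdiff j s a) θ).mul (hdiffQ a))]
  unfold Model.dvDef
  refine Finset.sum_congr rfl fun a _ => ?_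
  rw [grad_mul ((hdiff j s a) θ) (hdiffQ a)]
  have hdq : M.dq θ j s a = gradient (fun θ' => Qq M (M.pit θ') j s a) θ := by
    unfold Model.dq
    congr 1
    funext θ'
    exact qfun_eq M hvalid θ' j s a
  have hq : M.qfun θ j s a = Qq M (M.pit θ) j s a := qfun_eq M hvalid θ j s a
  rw [smul_add, hdq, hq, smul_comm (M.pit θ j s a),
    pit_smul_score M hdiff (fun θ' t s a => hvalid.pit_pos θ' t s a) θ j s a]

theorem dq_closed (hvalid : M.Valid)
    (hdiff : ∀ t s a, Differentiable ℝ fun θ' => M.pit θ' t s a)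
    (θ : Param D) (j : Fin (H + 1)) (s : S) (a : A) :
    M.dq θ j s a = ∑ s' : S, M.ptr j s a s' • M.dvDefExt θ j.succ s' := by
  have hdq : M.dq θ j s a = gradient (fun θ' => Qq M (M.pit θ') j s a) θ := by
    unfold Model.dq
    congr 1
    funext θ'
    exact qfun_eq M hvalid θ' j s a
  rw [hdq]
  have hQfun : (fun θ' => Qq M (M.pit θ') j s a)
      = fun θ' => (∑ r, M.prew j s a r * M.rval r)
          + ∑ s', M.ptr j s a s' * VV M (M.pit θ') ((j : ℕ) + 1) s' := rfl
  rw [hQfun, grad_add (differentiableAt_const _)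
      (DifferentiableAt.fun_sum fun s' _ => ((diff_VV M hdiff _ s') θ).const_mul _),
    grad_const, zero_add,
    grad_sum _ _ _ (fun s' _ => ((diff_VV M hdiff _ s') θ).const_mul _)]
  refine Finset.sum_congr rfl fun s' _ => ?_
  rw [grad_const_mul _ ((diff_VV M hdiff _ s') θ)]
  congr 1
  by_cases hj : (j : ℕ) + 1 ≤ H
  · unfold Model.dvDefExt
    rw [dif_pos (show ((j.succ : Fin (H + 2)) : ℕ) ≤ H by simpa [Fin.val_succ] using hj)]
    have hg := grad_VV M hvalid hdiff θ ⟨(j : ℕ) + 1, by omega⟩ s'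
    have hidx : (⟨((j.succ : Fin (H + 2)) : ℕ), by simp only [Fin.val_succ]; omega⟩ : Fin (H + 1))
        = ⟨(j : ℕ) + 1, by omega⟩ := Fin.ext (by simp [Fin.val_succ])
    rw [hidx]
    exact hg
  · unfold Model.dvDefExt
    rw [dif_neg (show ¬((j.succ : Fin (H + 2)) : ℕ) ≤ H by simpa [Fin.val_succ] using hj)]
    have h0 : (fun θ' => VV M (M.pit θ') ((j : ℕ) + 1) s') = fun _ => (0 : ℝ) := by
      funext θ'
      rw [VV_top M _ _ (by omega)]
    rw [h0, grad_const]

end Grad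

section Final

variable (M : Model S A R H D)

theorem cexp_dvDefExt (hvalid : M.Valid) (θ : Param D) (j : Fin (H + 1)) (s : S) (a : A) :
    cexp M.pb (fun T => T.1 j.castSucc = s ∧ T.2.1 j = a)
        (fun T => M.dvDefExt θ j.succ (T.1 j.succ))
      = ∑ s' : S, M.ptr j s a s' • M.dvDefExt θ j.succ s' := by
  classical
  have hcard := card_ne_zero M hvalid
  have hkey := keyMain M M.pib hvalid.pib_sum hvalid.prew_sum hvalid.ptr_sum hcard j s a
    (fun (_ : R) (s' : S) => M.dvDefExt θ j.succ s')
  have hkey1 := keyMain M M.pib hvalid.pib_sum hvalid.prew_sum hvalid.ptr_sum hcard j s a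
    (fun (_ : R) (_ : S) => (1 : ℝ))
  set P : ℝ := ∑ T : Traj S A R H,
    M.traj M.pib T * (if T.1 j.castSucc = s ∧ T.2.1 j = a then (1 : ℝ) else 0) with hP
  set P' : ℝ := ∑ T : Traj S A R H,
    M.traj M.pib T * (if T.1 j.castSucc = s then (1 : ℝ) else 0) with hP'
  have hden : P = P' * M.pib j s a := by
    rw [hP]
    calc ∑ T : Traj S A R H,
          M.traj M.pib T * (if T.1 j.castSucc = s ∧ T.2.1 j = a then (1 : ℝ) else 0)
        = ∑ T : Traj S A R H,
            (M.traj M.pib T * (if T.1 j.castSucc = s ∧ T.2.1 j = a then (1 : ℝ) else 0)) •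
              ((fun (_ : R) (_ : S) => (1 : ℝ)) (T.2.2 j) (T.1 j.succ)) := by
          refine Finset.sum_congr rfl fun T _ => by simp
      _ = P' * M.pib j s a := by
          rw [hkey1, gsum_expand M j s a hvalid.prew_sum (fun _ => (1 : ℝ))]
          simp only [smul_eq_mul]
          rw [show ∑ s' : S, M.ptr j s a s' * 1 = 1 from by
            simp only [mul_one]; exact hvalid.ptr_sum j s a]
          rw [mul_one]
  have hPpos : 0 < P := by
    have := prSA_pb_pos M hvalid j s a
    simpa [Model.pb, hP] using this
  unfold cexp
  beta_reduce
  have e1 : (∑ T : Traj S A R H,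
      @ite _ (T.1 j.castSucc = s ∧ T.2.1 j = a) (Classical.propDecidable _) (M.pb T) 0) = P := by
    rw [hP]
    refine Finset.sum_congr rfl fun T _ => ?_
    by_cases h : T.1 j.castSucc = s ∧ T.2.1 j = a <;> simp [h, Model.pb]
  have e2 : (∑ T : Traj S A R H,
      @ite _ (T.1 j.castSucc = s ∧ T.2.1 j = a) (Classical.propDecidable _)
        (M.pb T • M.dvDefExt θ j.succ (T.1 j.succ)) 0)
      = ∑ T : Traj S A R H,
          (M.traj M.pib T * (if T.1 j.castSucc = s ∧ T.2.1 j = a then (1 : ℝ) else 0)) •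
            ((fun (_ : R) (s' : S) => M.dvDefExt θ j.succ s') (T.2.2 j) (T.1 j.succ)) := by
    refine Finset.sum_congr rfl fun T _ => ?_
    by_cases h : T.1 j.castSucc = s ∧ T.2.1 j = a <;> simp [h, Model.pb]
  rw [e1, e2, hkey, gsum_expand M j s a hvalid.prew_sum]
  rw [smul_smul, smul_smul, hden]
  have hPne : P' * M.pib j s a ≠ 0 := by
    rw [← hden]
    exact ne_of_gt hPpos
  rw [mul_assoc, inv_mul_cancel₀ hPne, one_smul]

end Final

/-- Bellman equation for the gradient of the `q`-function:
(i) `d^v_j = ∇_θ v_j`; (ii) `d^q_j(s,a) = E_{p_{π^b}}[d^v_{j+1}(s_{j+1}) ∣ s_j = s, a_j = a]`;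
equivalently (iii) `d^q_j(s,a) = ∑_{s'} p_j(s'|s,a) d^v_{j+1}(s')`. -/
theorem dq_bellman (M : Model S A R H D) (θ : Param D)
    (hvalid : M.Valid)
    (hdiff : ∀ t s a, Differentiable ℝ fun θ' => M.pit θ' t s a) :
    (∀ (j : Fin (H + 1)) (s : S), M.dvDef θ j s = M.dv θ j.castSucc s) ∧
    (∀ (j : Fin (H + 1)) (s : S) (a : A),
      M.dq θ j s a =
        cexp M.pb (fun T => T.1 j.castSucc = s ∧ T.2.1 j = a)
          (fun T => M.dvDefExt θ j.succ (T.1 j.succ))) ∧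
    (∀ (j : Fin (H + 1)) (s : S) (a : A),
      M.dq θ j s a = ∑ s' : S, M.ptr j s a s' • M.dvDefExt θ j.succ s') := by
  refine ⟨?_, ?_, fun j s a => dq_closed M hvalid hdiff θ j s a⟩
  · intro j s
    unfold Model.dv
    have hfn : (fun θ' => M.vfun θ' j.castSucc s) = fun θ' => VV M (M.pit θ') (j : ℕ) s :=
      funext fun θ' => vfun_eq M hvalid θ' j s
    rw [hfn, grad_VV M hvalid hdiff θ j s]
  · intro j s a
    rw [dq_closed M hvalid hdiff θ j s a]
    exact (cexp_dvDefExt M hvalid θ j s a).symm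

end OPPG
end
end

section
/- (Theorem: guarantee for gradient ascent with inexact gradients.) Let D ∈ ℕ, let J : ℝ^D → ℝ be differentiable with M-Lipschitz gradient, i.e. ‖∇J(x) − ∇J(y)‖₂ ≤ M‖x − y‖₂ for all x, y ∈ ℝ^D. Let T ≥ 1, let α_1,…,α_T > 0 satisfy M ≤ 1/(4α_t) for each t, let B_1,…,B_T ∈ ℝ^D be arbitrary error vectors, and let the iterates satisfy θ_{t+1} = θ_t + α_t(∇J(θ_t) + B_t) for t = 1,…,T. If J* ∈ ℝ satisfies J(θ_t) ≤ J* for all t = 1,…,T+1, then (1/T) ∑_{t=1}^T α_t ‖∇J(θ_t)‖₂² ≤ 4(J* − J(θ₁))/T + (3/T) ∑_{t=1}^T α_t ‖B_t‖₂². -/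
open Finset
open scoped RealInnerProductSpace

noncomputable section
set_option maxHeartbeats 1000000

lemma descent_lemma_aux {D : ℕ} (J : EuclideanSpace ℝ (Fin D) → ℝ) (M : ℝ)
    (hJ : Differentiable ℝ J)
    (hLip : ∀ x y : EuclideanSpace ℝ (Fin D),
      ‖gradient J x - gradient J y‖ ≤ M * ‖x - y‖)
    (x v : EuclideanSpace ℝ (Fin D)) :
    J x + ⟪gradient J x, v⟫ - M / 2 * ‖v‖ ^ 2 ≤ J (x + v) := by
  have hgc : Continuous (gradient J) := by
    have : LipschitzWith (Real.toNNReal M) (gradient J) := by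
      apply LipschitzWith.of_dist_le_mul
      intro a b
      rw [dist_eq_norm, dist_eq_norm]
      exact (hLip a b).trans
        (mul_le_mul_of_nonneg_right (Real.le_coe_toNNReal M) (norm_nonneg _))
    exact this.continuous
  set φ' : ℝ → ℝ := fun t => ⟪gradient J (x + t • v), v⟫ with hφ'
  have hderiv : ∀ t : ℝ, HasDerivAt (fun s => J (x + s • v)) (φ' t) t := by
    intro t
    have h1 : HasDerivAt (fun s : ℝ => x + s • v) v t := by
      simpa using ((hasDerivAt_id t).smul_const v).const_add x
    have h2 := ((hJ (x + t • v)).hasGradientAt.hasFDerivAt).comp_hasDerivAt t h1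
    exact h2
  have hφ'c : Continuous φ' :=
    Continuous.inner (hgc.comp (by continuity)) continuous_const
  have hint : ∫ t in (0:ℝ)..1, φ' t = J (x + v) - J x := by
    have := intervalIntegral.integral_eq_sub_of_hasDerivAt
      (f := fun s => J (x + s • v)) (f' := φ') (a := 0) (b := 1)
      (fun t _ => hderiv t) (hφ'c.intervalIntegrable 0 1)
    simpa using this
  have h1 : ∀ t ∈ Set.Icc (0:ℝ) 1, ‖φ' t - ⟪gradient J x, v⟫‖ ≤ M * ‖v‖ ^ 2 * t := by
    intro t ht
    have he : φ' t - ⟪gradient J x, v⟫ = ⟪gradient J (x + t • v) - gradient J x, v⟫ := by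
      rw [inner_sub_left]
    rw [he]
    calc ‖⟪gradient J (x + t • v) - gradient J x, v⟫‖
        ≤ ‖gradient J (x + t • v) - gradient J x‖ * ‖v‖ := norm_inner_le_norm _ _
      _ ≤ (M * ‖(x + t • v) - x‖) * ‖v‖ :=
          mul_le_mul_of_nonneg_right (hLip _ _) (norm_nonneg _)
      _ = M * ‖v‖ ^ 2 * t := by
          have : ‖(x + t • v) - x‖ = t * ‖v‖ := by
            rw [add_sub_cancel_left, norm_smul, Real.norm_eq_abs, abs_of_nonneg ht.1]
          rw [this]; ring
  have hMv : 0 ≤ M * ‖v‖ ^ 2 := by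
    have := h1 1 (by norm_num)
    have h0 := norm_nonneg (φ' 1 - ⟪gradient J x, v⟫)
    nlinarith
  have hintg : ∫ t in (0:ℝ)..1, M * ‖v‖ ^ 2 * t = M / 2 * ‖v‖ ^ 2 := by
    rw [intervalIntegral.integral_const_mul, integral_id]
    ring
  have hbound : ‖∫ t in (0:ℝ)..1, (φ' t - ⟪gradient J x, v⟫)‖ ≤ M / 2 * ‖v‖ ^ 2 := by
    have hae : ∀ᵐ t ∂(MeasureTheory.volume.restrict (Set.uIoc (0:ℝ) 1)),
        ‖φ' t - ⟪gradient J x, v⟫‖ ≤ M * ‖v‖ ^ 2 * t := by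
      apply MeasureTheory.ae_restrict_of_forall_mem measurableSet_uIoc
      intro t ht
      rw [Set.uIoc_of_le (by norm_num : (0:ℝ) ≤ 1)] at ht
      exact h1 t ⟨le_of_lt ht.1, ht.2⟩
    have hgi : IntervalIntegrable (fun t => M * ‖v‖ ^ 2 * t)
        MeasureTheory.volume 0 1 := (by continuity : Continuous _).intervalIntegrable 0 1
    have := intervalIntegral.norm_integral_le_abs_of_norm_le hae hgi
    rw [hintg] at this
    calc ‖∫ t in (0:ℝ)..1, (φ' t - ⟪gradient J x, v⟫)‖
        ≤ |M / 2 * ‖v‖ ^ 2| := this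
      _ = M / 2 * ‖v‖ ^ 2 := abs_of_nonneg (by nlinarith)
  have hsplit : ∫ t in (0:ℝ)..1, (φ' t - ⟪gradient J x, v⟫)
      = (J (x + v) - J x) - ⟪gradient J x, v⟫ := by
    rw [intervalIntegral.integral_sub (hφ'c.intervalIntegrable 0 1)
      (intervalIntegrable_const), hint]
    simp
  rw [hsplit, Real.norm_eq_abs] at hbound
  have := abs_le.mp hbound
  linarith [this.1]

/-- Guarantee for gradient ascent with inexact gradients: if `J` is
differentiable with `M`-Lipschitz gradient (`M`-smooth), `M ≤ 1/(4 α_t)`, the iterates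
satisfy `θ_{t+1} = θ_t + α_t (∇J(θ_t) + B_t)`, and `J(θ_t) ≤ J*` for all `1 ≤ t ≤ T+1`,
then `(1/T) ∑_{t=1}^T α_t ‖∇J(θ_t)‖² ≤ 4 (J* − J(θ₁))/T + (3/T) ∑_{t=1}^T α_t ‖B_t‖²`. -/
theorem inexact_gradient_ascent_guarantee (D : ℕ)
    (J : EuclideanSpace ℝ (Fin D) → ℝ) (M : ℝ)
    (hJ : Differentiable ℝ J)
    (hLip : ∀ x y : EuclideanSpace ℝ (Fin D),
      ‖gradient J x - gradient J y‖ ≤ M * ‖x - y‖)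
    (T : ℕ) (hT : 1 ≤ T)
    (α : ℕ → ℝ) (B : ℕ → EuclideanSpace ℝ (Fin D))
    (θ : ℕ → EuclideanSpace ℝ (Fin D))
    (hα : ∀ t ∈ Finset.Icc 1 T, 0 < α t)
    (hM : ∀ t ∈ Finset.Icc 1 T, M ≤ 1 / (4 * α t))
    (hstep : ∀ t ∈ Finset.Icc 1 T, θ (t + 1) = θ t + α t • (gradient J (θ t) + B t))
    (Jstar : ℝ) (hstar : ∀ t ∈ Finset.Icc 1 (T + 1), J (θ t) ≤ Jstar) :
    (1 / (T : ℝ)) * ∑ t ∈ Finset.Icc 1 T, α t * ‖gradient J (θ t)‖ ^ 2 ≤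
      4 * (Jstar - J (θ 1)) / (T : ℝ) +
        (3 / (T : ℝ)) * ∑ t ∈ Finset.Icc 1 T, α t * ‖B t‖ ^ 2 := by
  -- per-step inequality
  have key : ∀ t ∈ Finset.Icc 1 T,
      α t * ‖gradient J (θ t)‖ ^ 2
        ≤ 4 * (J (θ (t + 1)) - J (θ t)) + 3 * (α t * ‖B t‖ ^ 2) := by
    intro t ht
    set g := gradient J (θ t)
    set b := B t
    set a := α t
    have ha : 0 < a := hα t ht
    have hMa : M ≤ 1 / (4 * a) := hM t ht
    have hdes := descent_lemma_aux J M hJ hLip (θ t) (a • (g + b))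
    rw [← hstep t ht] at hdes
    have hin : ⟪g, a • (g + b)⟫ = a * (‖g‖ ^ 2 + ⟪g, b⟫) := by
      rw [inner_smul_right, inner_add_right, real_inner_self_eq_norm_sq]
    have hns : ‖a • (g + b)‖ ^ 2 = a ^ 2 * ‖g + b‖ ^ 2 := by
      rw [norm_smul, mul_pow, Real.norm_eq_abs, sq_abs]
    have hgb : ‖g + b‖ ^ 2 ≤ 2 * ‖g‖ ^ 2 + 2 * ‖b‖ ^ 2 := by
      have h := norm_add_le g b
      have h2 := pow_le_pow_left₀ (norm_nonneg (g + b)) h 2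
      nlinarith [sq_nonneg (‖g‖ - ‖b‖)]
    have hinb : -(‖g‖ * ‖b‖) ≤ ⟪g, b⟫ := by
      have := abs_real_inner_le_norm g b
      have := abs_le.mp this
      linarith [this.1]
    have hstarJ : J (θ t) + a * (‖g‖ ^ 2 + ⟪g, b⟫)
        - M / 2 * (a ^ 2 * ‖g + b‖ ^ 2) ≤ J (θ (t + 1)) := by
      rw [hin, hns] at hdes; exact hdes
    -- M/2 * a^2 * X ≤ (1/(8a)) * a^2 * X = a/8 * X for X ≥ 0
    have hX : (0:ℝ) ≤ ‖g + b‖ ^ 2 := sq_nonneg _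
    have hMq : M / 2 * (a ^ 2 * ‖g + b‖ ^ 2) ≤ a / 8 * ‖g + b‖ ^ 2 := by
      have h1 : M * (4 * a) ≤ 1 := by
        rw [le_div_iff₀ (by positivity)] at hMa; linarith
      nlinarith [mul_le_mul_of_nonneg_right hgb (le_of_lt ha)]
    have hcs : ‖g‖ * ‖b‖ ≤ (‖g‖ ^ 2 + ‖b‖ ^ 2) / 2 := by
      nlinarith [sq_nonneg (‖g‖ - ‖b‖)]
    nlinarith [mul_le_mul_of_nonneg_left hgb (by linarith : (0:ℝ) ≤ a / 8),
      mul_le_mul_of_nonneg_left hcs (le_of_lt ha),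
      mul_le_mul_of_nonneg_left hinb (le_of_lt ha)]
  -- sum and telescope
  have hsum : ∑ t ∈ Finset.Icc 1 T, α t * ‖gradient J (θ t)‖ ^ 2
      ≤ 4 * (Jstar - J (θ 1)) + 3 * ∑ t ∈ Finset.Icc 1 T, α t * ‖B t‖ ^ 2 := by
    have h1 := Finset.sum_le_sum key
    have htel : ∑ t ∈ Finset.Icc 1 T, (J (θ (t + 1)) - J (θ t)) = J (θ (T + 1)) - J (θ 1) := by
      rw [← Finset.Ico_add_one_right_eq_Icc, Finset.sum_Ico_eq_sum_range]
      calc ∑ i ∈ Finset.range T, (J (θ (1 + i + 1)) - J (θ (1 + i)))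
          = ∑ i ∈ Finset.range T, (J (θ (i + 1 + 1)) - J (θ (i + 1))) := by
            apply Finset.sum_congr rfl; intro i _; rw [add_comm 1 i]
        _ = J (θ (T + 1)) - J (θ (0 + 1)) := Finset.sum_range_sub (fun i => J (θ (i + 1))) T
        _ = J (θ (T + 1)) - J (θ 1) := by norm_num
    rw [Finset.sum_add_distrib, ← Finset.mul_sum, ← Finset.mul_sum, htel] at h1
    have hst : J (θ (T + 1)) ≤ Jstar := hstar (T + 1) (by simp)
    linarith
  have hTpos : (0:ℝ) < T := by exact_mod_cast Nat.lt_of_lt_of_le Nat.zero_lt_one hT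
  have h2 := mul_le_mul_of_nonneg_left hsum (le_of_lt (by positivity : (0:ℝ) < 1 / T))
  calc (1 / (T : ℝ)) * ∑ t ∈ Finset.Icc 1 T, α t * ‖gradient J (θ t)‖ ^ 2
      ≤ (1 / (T : ℝ)) * (4 * (Jstar - J (θ 1)) + 3 * ∑ t ∈ Finset.Icc 1 T, α t * ‖B t‖ ^ 2) :=
        h2
    _ = 4 * (Jstar - J (θ 1)) / (T : ℝ) +
        (3 / (T : ℝ)) * ∑ t ∈ Finset.Icc 1 T, α t * ‖B t‖ ^ 2 := by ring
end
end
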